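/- arXiv:1503.00968 — 3 statements merged into one kernel-verified Lean document; each statement's English description precedes it below -/
import Mathlib

section
/- Let (N₀,h₀), …, (N_m,h_m) be pseudo-Riemannian manifolds and consider on N = N₀ × N₁ × … × N_m the metric h = h₀ + f₁²h₁ + … + f_m²h_m, where each fᵢ = λ + cᵢ is a nowhere vanishing function of N₀ for constants cᵢ and λ is a function on N₀ such that grad λ is parallel and null with respect to h₀. Then for vector fields Xᵢ, Yᵢ tangent to Nᵢ: R(Xᵢ,Yᵢ) = Rⁱ(Xᵢ,Yᵢ) and R(X_j, X_k) = 0 for j ≠ k, where R and Rⁱ are the curvature tensors of h and hᵢ respectively. Consequently Ric(Xᵢ,Yᵢ) = Ricⁱ(Xᵢ,Yᵢ) and Ric(X_j,X_k) = 0 for j ≠ k. -/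
open Real Matrix Finset

/-! Coordinate framework for pseudo-Riemannian geometry on `ℝ^ι`:
metrics are matrix-valued functions, and the Levi-Civita connection is given by
the Christoffel symbols. -/

variable {ι : Type} [Fintype ι] [DecidableEq ι]

/-- Partial derivative in the `i`-th coordinate direction. -/
noncomputable def pd (i : ι) (f : (ι → ℝ) → ℝ) (x : ι → ℝ) : ℝ :=
  fderiv ℝ f x (Pi.single i 1)

/-- Christoffel symbols `Γ^k_{ij}` of a metric `g` in coordinates. -/
noncomputable def christoffel (g : (ι → ℝ) → Matrix ι ι ℝ) (k i j : ι) (x : ι → ℝ) : ℝ :=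
  (1 / 2) * ∑ l, (g x)⁻¹ k l *
    (pd i (fun y => g y j l) x + pd j (fun y => g y i l) x - pd l (fun y => g y i j) x)

/-- Covariant derivative `(∇_{∂k} L)_{ij}` of a `(0,2)`-tensor field `L`. -/
noncomputable def covDer2 (g L : (ι → ℝ) → Matrix ι ι ℝ) (k i j : ι) (x : ι → ℝ) : ℝ :=
  pd k (fun y => L y i j) x - (∑ l, christoffel g l k i x * L x l j)
    - ∑ l, christoffel g l k j x * L x i l

/-- Covariant derivative `(∇_{∂k} Λ)_i` of a 1-form `Λ`. -/
noncomputable def covDer1 (g : (ι → ℝ) → Matrix ι ι ℝ) (Λ : (ι → ℝ) → ι → ℝ)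
    (k i : ι) (x : ι → ℝ) : ℝ :=
  pd k (fun y => Λ y i) x - ∑ l, christoffel g l k i x * Λ x l

/-- Covariant derivative `(∇_{∂k} X)^l` of a vector field `X`. -/
noncomputable def covDerVF (g : (ι → ℝ) → Matrix ι ι ℝ) (X : (ι → ℝ) → ι → ℝ)
    (k l : ι) (x : ι → ℝ) : ℝ :=
  pd k (fun y => X y l) x + ∑ m, christoffel g l k m x * X x m

/-- The `l`-th component of `R(∂i,∂j)∂k`, with the curvature convention
`R(X,Y)Z = ∇_X ∇_Y Z − ∇_Y ∇_X Z − ∇_{[X,Y]} Z`. -/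
noncomputable def riem (g : (ι → ℝ) → Matrix ι ι ℝ) (l i j k : ι) (x : ι → ℝ) : ℝ :=
  pd i (christoffel g l j k) x - pd j (christoffel g l i k) x
    + (∑ m, christoffel g l i m x * christoffel g m j k x)
    - ∑ m, christoffel g l j m x * christoffel g m i k x

/-- Ricci tensor `Ric(∂i,∂j) = trace (Z ↦ R(Z,∂i)∂j)`. -/
noncomputable def ricci (g : (ι → ℝ) → Matrix ι ι ℝ) (i j : ι) (x : ι → ℝ) : ℝ :=
  ∑ l, riem g l l i j x

/-- All matrix entries of `g` are smooth functions. -/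
def SmoothM (g : (ι → ℝ) → Matrix ι ι ℝ) : Prop :=
  ∀ i j, ContDiff ℝ (⊤ : ℕ∞) fun x => g x i j

/-- `g` is symmetric. -/
def SymM (g : (ι → ℝ) → Matrix ι ι ℝ) : Prop := ∀ x, (g x)ᵀ = g x

/-- `g` is everywhere nondegenerate. -/
def NondegM (g : (ι → ℝ) → Matrix ι ι ℝ) : Prop := ∀ x, (g x).det ≠ 0

/-- The projective equation `∇_X L = X^♭ ⊙ Λ`; in coordinates
`(∇_{∂k} L)_{ij} = g_{ki} Λ_j + g_{kj} Λ_i`. -/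
def ProjEqn (g L : (ι → ℝ) → Matrix ι ι ℝ) (Λ : (ι → ℝ) → ι → ℝ) : Prop :=
  ∀ k i j x, covDer2 g L k i j x = g x k i * Λ x j + g x k j * Λ x i

/-- `ξ` is a cone vector field: `∇̂_X ξ = X` for all `X`. -/
def IsConeVF (g : (ι → ℝ) → Matrix ι ι ℝ) (ξ : (ι → ℝ) → ι → ℝ) : Prop :=
  ∀ k l x, covDerVF g ξ k l x = if k = l then 1 else 0

/-- The multiply warped product metric `h = h₀ + f₁² h₁ + … + f_m² h_m` on
`N₀ × N₁ × … × N_m`, in coordinates indexed by the sigma type `(i : Fin (m+1)) × κ i`;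
the warping functions `f i` are functions on the `N₀` factor and `f 0 = 1`. -/
noncomputable def warpedMetric {m : ℕ} {κ : Fin (m + 1) → Type}
    [∀ i, Fintype (κ i)] [∀ i, DecidableEq (κ i)]
    (G : ∀ i, (κ i → ℝ) → Matrix (κ i) (κ i) ℝ)
    (f : Fin (m + 1) → (κ 0 → ℝ) → ℝ)
    (x : ((i : Fin (m + 1)) × κ i) → ℝ) :
    Matrix ((i : Fin (m + 1)) × κ i) ((i : Fin (m + 1)) × κ i) ℝ :=
  fun p q =>
    if hpq : p.1 = q.1 then
      (f p.1 (x ∘ Sigma.mk 0)) ^ 2 *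
        G p.1 (x ∘ Sigma.mk p.1) p.2 (hpq.symm ▸ q.2)
    else 0

/-- The `h₀`-gradient of a function on `N₀`, in coordinates. -/
noncomputable def grad0 {κ₀ : Type} [Fintype κ₀] [DecidableEq κ₀]
    (g₀ : (κ₀ → ℝ) → Matrix κ₀ κ₀ ℝ) (φ : (κ₀ → ℝ) → ℝ)
    (y : κ₀ → ℝ) (a : κ₀) : ℝ :=
  ∑ b, (g₀ y)⁻¹ a b * pd b φ y

set_option linter.unusedSectionVars false
section PartA
variable {ι : Type} [Fintype ι] [DecidableEq ι]

lemma pd_congr {f g : (ι → ℝ) → ℝ} (h : ∀ y, f y = g y) (i : ι) (x : ι → ℝ) :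
    pd i f x = pd i g x := by
  have : f = g := funext h
  rw [this]

lemma pd_const (i : ι) (c : ℝ) (x : ι → ℝ) : pd i (fun _ => c) x = 0 := by
  simp [pd]

lemma pd_add {f g : (ι → ℝ) → ℝ} {x : ι → ℝ} (hf : DifferentiableAt ℝ f x)
    (hg : DifferentiableAt ℝ g x) (i : ι) :
    pd i (fun y => f y + g y) x = pd i f x + pd i g x := by
  simp [pd, fderiv_fun_add hf hg]

lemma pd_neg {f : (ι → ℝ) → ℝ} {x : ι → ℝ} (i : ι) :
    pd i (fun y => -f y) x = -pd i f x := by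
  simp [pd, fderiv_neg]

lemma pd_mul {f g : (ι → ℝ) → ℝ} {x : ι → ℝ} (hf : DifferentiableAt ℝ f x)
    (hg : DifferentiableAt ℝ g x) (i : ι) :
    pd i (fun y => f y * g y) x = pd i f x * g x + f x * pd i g x := by
  simp [pd, fderiv_fun_mul hf hg]
  ring

lemma pd_sum {α : Type*} {s : Finset α} {F : α → (ι → ℝ) → ℝ} {x : ι → ℝ}
    (h : ∀ a ∈ s, DifferentiableAt ℝ (F a) x) (i : ι) :
    pd i (fun y => ∑ a ∈ s, F a y) x = ∑ a ∈ s, pd i (F a) x := by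
  simp [pd, fderiv_fun_sum h]

lemma pd_inv {f : (ι → ℝ) → ℝ} {x : ι → ℝ} (hf : DifferentiableAt ℝ f x)
    (hne : f x ≠ 0) (i : ι) :
    pd i (fun y => (f y)⁻¹) x = -((f x)^2)⁻¹ * pd i f x := by
  have : (fun y => (f y)⁻¹) = (fun t : ℝ => t⁻¹) ∘ f := rfl
  rw [pd, this, fderiv_comp x (differentiableAt_inv hne) hf]
  rw [fderiv_inv]
  simp [pd]
  ring

lemma contDiff_top_finset_prod {α : Type*} {s : Finset α} {F : α → (ι → ℝ) → ℝ}
    (h : ∀ a ∈ s, ContDiff ℝ (⊤ : ℕ∞) (F a)) :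
    ContDiff ℝ (⊤ : ℕ∞) fun y => ∏ a ∈ s, F a y := by
  classical
  induction s using Finset.induction_on with
  | empty => simpa using contDiff_const
  | insert a s ha ih =>
    simp only [Finset.prod_insert ha]
    exact (h a (Finset.mem_insert_self a s)).mul
      (ih fun b hb => h b (Finset.mem_insert_of_mem hb))

lemma smooth_pd {f : (ι → ℝ) → ℝ} (hf : ContDiff ℝ (⊤ : ℕ∞) f) (i : ι) :
    ContDiff ℝ (⊤ : ℕ∞) (pd i f) := by
  have h1 : ContDiff ℝ (⊤ : ℕ∞) (fderiv ℝ f) := hf.fderiv_right (by simp)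
  have h2 : ContDiff ℝ (⊤ : ℕ∞) (fun L : ((ι → ℝ) →L[ℝ] ℝ) => L (Pi.single i 1)) :=
    by have := (ContinuousLinearMap.apply ℝ ℝ (Pi.single i (1:ℝ) : ι → ℝ)).contDiff (n := (⊤ : ℕ∞)); exact this
  exact h2.comp h1

lemma smooth_det {M : (ι → ℝ) → Matrix ι ι ℝ}
    (h : ∀ i j, ContDiff ℝ (⊤ : ℕ∞) fun y => M y i j) :
    ContDiff ℝ (⊤ : ℕ∞) fun y => (M y).det := by
  simp only [Matrix.det_apply']
  apply ContDiff.sum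
  intro σ _
  exact contDiff_const.mul (contDiff_top_finset_prod fun a _ => h (σ a) a)

lemma smooth_inv_entry {M : (ι → ℝ) → Matrix ι ι ℝ}
    (h : ∀ i j, ContDiff ℝ (⊤ : ℕ∞) fun y => M y i j)
    (hd : ∀ y, (M y).det ≠ 0) (i j : ι) :
    ContDiff ℝ (⊤ : ℕ∞) fun y => (M y)⁻¹ i j := by
  have key : ∀ y, (M y)⁻¹ i j = ((M y).det)⁻¹ * (M y).adjugate i j := by
    intro y
    rw [Matrix.inv_def, Ring.inverse_eq_inv']
    simp [Matrix.smul_apply]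
  simp only [key]
  apply ContDiff.mul
  · exact (smooth_det h).inv hd
  · simp only [Matrix.adjugate_apply]
    apply smooth_det
    intro a b
    by_cases hab : a = j
    · subst hab
      simpa [Matrix.updateRow_self] using contDiff_const
    · simpa [Matrix.updateRow_ne hab] using h a b

lemma smooth_christoffel {g : (ι → ℝ) → Matrix ι ι ℝ}
    (hs : SmoothM g) (hn : NondegM g) (k i j : ι) :
    ContDiff ℝ (⊤ : ℕ∞) (christoffel g k i j) := by
  unfold christoffel
  apply contDiff_const.mul
  apply ContDiff.sum
  intro l _
  apply ContDiff.mul (smooth_inv_entry hs hn k l)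
  exact ((smooth_pd (hs j l) i).add (smooth_pd (hs i l) j)).sub (smooth_pd (hs i j) l)

end PartA
section PartB
variable {m : ℕ} {κ : Fin (m + 1) → Type} [∀ i, Fintype (κ i)] [∀ i, DecidableEq (κ i)]

lemma sumSigma {β : Type*} [AddCommMonoid β] (F : ((i : Fin (m+1)) × κ i) → β) :
    ∑ p : (i : Fin (m+1)) × κ i, F p = ∑ i, ∑ a, F ⟨i, a⟩ := by
  rw [← Finset.univ_sigma_univ, Finset.sum_sigma]

/-- Projection onto the `i`-th block, as a continuous linear map. -/
noncomputable def projL (i : Fin (m+1)) :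
    (((j : Fin (m+1)) × κ j) → ℝ) →L[ℝ] (κ i → ℝ) :=
  ContinuousLinearMap.pi fun a => ContinuousLinearMap.proj ⟨i, a⟩

lemma projL_single_same (i : Fin (m+1)) (c : κ i) :
    projL (κ := κ) i (Pi.single ⟨i, c⟩ (1:ℝ)) = Pi.single c 1 := by
  funext a
  simp only [projL, ContinuousLinearMap.pi_apply, ContinuousLinearMap.proj_apply]
  simp [Pi.single_apply, Sigma.ext_iff]

lemma projL_single_ne {k i : Fin (m+1)} (h : k ≠ i) (c : κ k) :
    projL (κ := κ) i (Pi.single ⟨k, c⟩ (1:ℝ)) = 0 := by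
  funext a
  simp only [projL, ContinuousLinearMap.pi_apply, ContinuousLinearMap.proj_apply]
  have : (⟨i,a⟩ : (j : Fin (m+1)) × κ j) ≠ ⟨k,c⟩ := by
    intro hc; exact h (congrArg Sigma.fst hc).symm
  simp [Pi.single_apply, this]

lemma diff_blk {i : Fin (m+1)} {F : (κ i → ℝ) → ℝ} (hF : ContDiff ℝ (⊤ : ℕ∞) F) :
    ContDiff ℝ (⊤ : ℕ∞) (fun y : ((j : Fin (m+1)) × κ j) → ℝ => F (y ∘ Sigma.mk i)) :=
  hF.comp (by have := (projL (κ := κ) i).contDiff (n := (⊤ : ℕ∞)); exact this)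

lemma pd_blk_same {i : Fin (m+1)} {F : (κ i → ℝ) → ℝ} {x : ((j : Fin (m+1)) × κ j) → ℝ}
    (hF : DifferentiableAt ℝ F (x ∘ Sigma.mk i)) (c : κ i) :
    pd ⟨i, c⟩ (fun y => F (y ∘ Sigma.mk i)) x = pd c F (x ∘ Sigma.mk i) := by
  have he : (fun y : ((j : Fin (m+1)) × κ j) → ℝ => F (y ∘ Sigma.mk i))
      = F ∘ (projL i) := rfl
  rw [pd, he]
  rw [fderiv_comp (g := F) (f := ⇑(projL (κ := κ) i)) x hF ((projL (κ := κ) i).differentiableAt (x := x))]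
  rw [ContinuousLinearMap.fderiv]
  simp only [ContinuousLinearMap.coe_comp', Function.comp_apply, projL_single_same]
  rfl

lemma pd_blk_ne {k i : Fin (m+1)} (h : k ≠ i) {F : (κ i → ℝ) → ℝ}
    {x : ((j : Fin (m+1)) × κ j) → ℝ}
    (hF : DifferentiableAt ℝ F (x ∘ Sigma.mk i)) (c : κ k) :
    pd ⟨k, c⟩ (fun y => F (y ∘ Sigma.mk i)) x = 0 := by
  have he : (fun y : ((j : Fin (m+1)) × κ j) → ℝ => F (y ∘ Sigma.mk i))
      = F ∘ (projL i) := rfl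
  rw [pd, he]
  rw [fderiv_comp (g := F) (f := ⇑(projL (κ := κ) i)) x hF ((projL (κ := κ) i).differentiableAt (x := x))]
  rw [ContinuousLinearMap.fderiv]
  simp only [ContinuousLinearMap.coe_comp', Function.comp_apply, projL_single_ne h]
  simp

section Warped
variable (G : ∀ i, (κ i → ℝ) → Matrix (κ i) (κ i) ℝ)
variable (f : Fin (m + 1) → (κ 0 → ℝ) → ℝ)

lemma warped_same (x : ((i : Fin (m+1)) × κ i) → ℝ) (i : Fin (m+1)) (a b : κ i) :
    warpedMetric G f x ⟨i, a⟩ ⟨i, b⟩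
      = (f i (x ∘ Sigma.mk 0))^2 * G i (x ∘ Sigma.mk i) a b := by
  simp [warpedMetric]

lemma warped_ne (x : ((i : Fin (m+1)) × κ i) → ℝ) {p q : (i : Fin (m+1)) × κ i}
    (h : p.1 ≠ q.1) : warpedMetric G f x p q = 0 := by
  simp [warpedMetric, h]

/-- Candidate inverse for the warped metric. -/
noncomputable def warpedInv (x : ((i : Fin (m+1)) × κ i) → ℝ) :
    Matrix ((i : Fin (m+1)) × κ i) ((i : Fin (m+1)) × κ i) ℝ :=
  fun p q =>
    if hpq : p.1 = q.1 then
      ((f p.1 (x ∘ Sigma.mk 0)) ^ 2)⁻¹ *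
        (G p.1 (x ∘ Sigma.mk p.1))⁻¹ p.2 (hpq.symm ▸ q.2)
    else 0

lemma warpedInv_same (x : ((i : Fin (m+1)) × κ i) → ℝ) (i : Fin (m+1)) (a b : κ i) :
    warpedInv G f x ⟨i, a⟩ ⟨i, b⟩
      = ((f i (x ∘ Sigma.mk 0))^2)⁻¹ * (G i (x ∘ Sigma.mk i))⁻¹ a b := by
  simp [warpedInv]

lemma warpedInv_ne (x : ((i : Fin (m+1)) × κ i) → ℝ) {p q : (i : Fin (m+1)) × κ i}
    (h : p.1 ≠ q.1) : warpedInv G f x p q = 0 := by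
  simp [warpedInv, h]

lemma warped_inv_eq (hGn : ∀ i, NondegM (G i)) (hfne : ∀ i y, f i y ≠ 0)
    (x : ((i : Fin (m+1)) × κ i) → ℝ) :
    (warpedMetric G f x)⁻¹ = warpedInv G f x := by
  apply Matrix.inv_eq_right_inv
  funext p q
  obtain ⟨i, a⟩ := p
  obtain ⟨j, b⟩ := q
  rw [Matrix.mul_apply, sumSigma]
  rw [Finset.sum_eq_single_of_mem i (Finset.mem_univ i)]
  · by_cases hij : i = j
    · subst hij
      have : ∀ e, warpedMetric G f x ⟨i,a⟩ ⟨i,e⟩ * warpedInv G f x ⟨i,e⟩ ⟨i,b⟩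
          = G i (x ∘ Sigma.mk i) a e * (G i (x ∘ Sigma.mk i))⁻¹ e b := by
        intro e
        rw [warped_same, warpedInv_same, mul_mul_mul_comm,
          mul_inv_cancel₀ (pow_ne_zero 2 (hfne i _)), one_mul]
      simp only [this]
      have hmul : G i (x ∘ Sigma.mk i) * (G i (x ∘ Sigma.mk i))⁻¹ = 1 :=
        Matrix.mul_nonsing_inv _ (isUnit_iff_ne_zero.mpr (hGn i _))
      have := congrFun (congrFun hmul a) b
      rw [Matrix.mul_apply] at this
      rw [this]
      by_cases hab : a = b
      · subst hab; simp [Matrix.one_apply]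
      · have : (⟨i,a⟩ : (i : Fin (m+1)) × κ i) ≠ ⟨i,b⟩ := by
          simp [Sigma.ext_iff, hab]
        simp [Matrix.one_apply, hab, this]
    · have h1 : ∀ e : κ i, warpedInv G f x ⟨i,e⟩ ⟨j,b⟩ = 0 := fun e =>
        warpedInv_ne G f x hij
      have h2 : (⟨i,a⟩ : (i : Fin (m+1)) × κ i) ≠ ⟨j,b⟩ := by
        intro hc; exact hij (congrArg Sigma.fst hc)
      simp [h1, Matrix.one_apply, h2]
  · intro l _ hl
    apply Finset.sum_eq_zero
    intro e _
    have : (⟨i,a⟩ : (i : Fin (m+1)) × κ i).1 ≠ (⟨l,e⟩ : (i : Fin (m+1)) × κ i).1 :=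
      fun hc => hl hc.symm
    rw [warped_ne G f x this, zero_mul]

end Warped
end PartB
section PartC
set_option maxHeartbeats 1000000

lemma dAt {ι : Type} [Fintype ι] [DecidableEq ι] {F : (ι → ℝ) → ℝ}
    (h : ContDiff ℝ (⊤ : ℕ∞) F) (x : ι → ℝ) : DifferentiableAt ℝ F x :=
  (h.differentiable (by simp)) x

lemma christoffel_symm {ι : Type} [Fintype ι] [DecidableEq ι]
    {g : (ι → ℝ) → Matrix ι ι ℝ} (hs : SymM g) (k i j : ι) (x : ι → ℝ) :
    christoffel g k i j x = christoffel g k j i x := by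
  have hsym : ∀ p q : ι, (fun y => g y p q) = (fun y => g y q p) := by
    intro p q; funext y
    have := congrFun (congrFun (hs y) p) q
    rw [Matrix.transpose_apply] at this
    exact this.symm
  unfold christoffel
  congr 1
  apply Finset.sum_congr rfl
  intro l _
  congr 1
  rw [hsym i j]
  ring

variable {m : ℕ} {κ : Fin (m + 1) → Type} [∀ i, Fintype (κ i)] [∀ i, DecidableEq (κ i)]
variable {G : ∀ i, (κ i → ℝ) → Matrix (κ i) (κ i) ℝ}
variable {f : Fin (m + 1) → (κ 0 → ℝ) → ℝ}
variable {lam : (κ 0 → ℝ) → ℝ} {c : Fin (m + 1) → ℝ}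

lemma warped_symm (hGs : ∀ i, SymM (G i)) : SymM (warpedMetric G f) := by
  intro x; funext p q
  obtain ⟨i,a⟩ := p; obtain ⟨j,b⟩ := q
  show warpedMetric G f x ⟨j,b⟩ ⟨i,a⟩ = warpedMetric G f x ⟨i,a⟩ ⟨j,b⟩
  by_cases hij : i = j
  · subst hij
    rw [warped_same, warped_same]
    have := congrFun (congrFun (hGs i (x ∘ Sigma.mk i)) b) a
    rw [Matrix.transpose_apply] at this
    rw [this]
  · rw [warped_ne G f x (p := ⟨j,b⟩) (q := ⟨i,a⟩) (fun hc => hij hc.symm),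
        warped_ne G f x (p := ⟨i,a⟩) (q := ⟨j,b⟩) hij]

section Hyp
variable (hG : ∀ i, SmoothM (G i)) (hGs : ∀ i, SymM (G i)) (hGn : ∀ i, NondegM (G i))
variable (hlam : ContDiff ℝ (⊤ : ℕ∞) lam)
variable (hf0 : f 0 = fun _ => 1)
variable (hf : ∀ i, i ≠ 0 → f i = fun y => lam y + c i)
variable (hfne : ∀ i y, f i y ≠ 0)

include hlam hf0 hf in
lemma smooth_f (i : Fin (m+1)) : ContDiff ℝ (⊤ : ℕ∞) (f i) := by
  by_cases hi : i = 0
  · subst hi; rw [hf0]; exact contDiff_const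
  · rw [hf i hi]; exact hlam.add contDiff_const

include hlam hf in
lemma pd_f (i : Fin (m+1)) (hi : i ≠ 0) (a : κ 0) (y : κ 0 → ℝ) :
    pd a (f i) y = pd a lam y := by
  rw [hf i hi]
  rw [pd_add (dAt hlam y) (differentiableAt_const _)]
  rw [pd_const]; ring

include hG hGn in
lemma smooth_christoffel_G (i : Fin (m+1)) (k a b : κ i) :
    ContDiff ℝ (⊤ : ℕ∞) (christoffel (G i) k a b) :=
  smooth_christoffel (hG i) (hGn i) k a b

end Hyp
end PartC
section PartC2
set_option maxHeartbeats 1000000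
variable {m : ℕ} {κ : Fin (m + 1) → Type} [∀ i, Fintype (κ i)] [∀ i, DecidableEq (κ i)]
variable {G : ∀ i, (κ i → ℝ) → Matrix (κ i) (κ i) ℝ}
variable {f : Fin (m + 1) → (κ 0 → ℝ) → ℝ}
variable {lam : (κ 0 → ℝ) → ℝ} {c : Fin (m + 1) → ℝ}
variable (hG : ∀ i, SmoothM (G i)) (hGs : ∀ i, SymM (G i)) (hGn : ∀ i, NondegM (G i))
variable (hlam : ContDiff ℝ (⊤ : ℕ∞) lam)
variable (hf0 : f 0 = fun _ => 1)
variable (hf : ∀ i, i ≠ 0 → f i = fun y => lam y + c i)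
variable (hfne : ∀ i y, f i y ≠ 0)

/-- pd of an off-block entry of the warped metric is zero. -/
lemma pdW_off {p q : (i : Fin (m+1)) × κ i} (hpq : p.1 ≠ q.1)
    (k : (i : Fin (m+1)) × κ i) (x : ((i : Fin (m+1)) × κ i) → ℝ) :
    pd k (fun y => warpedMetric G f y p q) x = 0 := by
  rw [pd_congr (fun y => warped_ne G f y hpq) k x, pd_const]

include hlam hf0 hf in
/-- pd of a diagonal-block entry in a direction of the same block. -/
lemma pdW_same (i : Fin (m+1)) (a b cc : κ i) (hGsm : SmoothM (G i))
    (x : ((i : Fin (m+1)) × κ i) → ℝ) :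
    pd ⟨i,cc⟩ (fun y => warpedMetric G f y ⟨i,a⟩ ⟨i,b⟩) x
      = (f i (x ∘ Sigma.mk 0))^2 * pd cc (fun z => G i z a b) (x ∘ Sigma.mk i) := by
  rw [pd_congr (fun y => warped_same G f y i a b) _ x]
  have d1 : DifferentiableAt ℝ (fun y : ((i : Fin (m+1)) × κ i) → ℝ =>
      (f i (y ∘ Sigma.mk 0))^2) x :=
    dAt (diff_blk ((smooth_f hlam hf0 hf i).pow 2)) x
  have d2 : DifferentiableAt ℝ (fun y : ((i : Fin (m+1)) × κ i) → ℝ =>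
      G i (y ∘ Sigma.mk i) a b) x :=
    dAt (diff_blk (hGsm a b)) x
  have e1 : pd ⟨i,cc⟩ (fun y : ((i : Fin (m+1)) × κ i) → ℝ =>
      (f i (y ∘ Sigma.mk 0))^2 * G i (y ∘ Sigma.mk i) a b) x
      = pd ⟨i,cc⟩ (fun y : ((i : Fin (m+1)) × κ i) → ℝ => (f i (y ∘ Sigma.mk 0))^2) x
          * G i (x ∘ Sigma.mk i) a b
        + (f i (x ∘ Sigma.mk 0))^2
          * pd ⟨i,cc⟩ (fun y : ((i : Fin (m+1)) × κ i) → ℝ => G i (y ∘ Sigma.mk i) a b) x :=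
    pd_mul d1 d2 _
  rw [e1]
  have e2 : pd ⟨i,cc⟩ (fun y : ((i : Fin (m+1)) × κ i) → ℝ => (f i (y ∘ Sigma.mk 0))^2) x
      = 0 := by
    by_cases hi : i = 0
    · subst hi
      have : ∀ y : ((i : Fin (m+1)) × κ i) → ℝ, (f 0 (y ∘ Sigma.mk 0))^2 = 1 := by
        intro y; rw [hf0]; norm_num
      rw [pd_congr this, pd_const]
    · exact pd_blk_ne hi (dAt ((smooth_f hlam hf0 hf i).pow 2) _) cc
  have e3 : pd ⟨i,cc⟩ (fun y : ((i : Fin (m+1)) × κ i) → ℝ => G i (y ∘ Sigma.mk i) a b) x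
      = pd cc (fun z => G i z a b) (x ∘ Sigma.mk i) :=
    pd_blk_same (dAt (hGsm a b) _) cc
  rw [e2, e3]; ring

include hlam hf0 hf in
/-- pd of a diagonal-block (`i ≠ 0`) entry in a block-0 direction. -/
lemma pdW_zero (i : Fin (m+1)) (hi : i ≠ 0) (a b : κ i) (cc : κ 0)
    (hGsm : SmoothM (G i)) (x : ((i : Fin (m+1)) × κ i) → ℝ) :
    pd ⟨0,cc⟩ (fun y => warpedMetric G f y ⟨i,a⟩ ⟨i,b⟩) x
      = 2 * f i (x ∘ Sigma.mk 0) * pd cc lam (x ∘ Sigma.mk 0)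
          * G i (x ∘ Sigma.mk i) a b := by
  rw [pd_congr (fun y => warped_same G f y i a b) _ x]
  have d1 : DifferentiableAt ℝ (fun y : ((i : Fin (m+1)) × κ i) → ℝ =>
      (f i (y ∘ Sigma.mk 0))^2) x :=
    dAt (diff_blk ((smooth_f hlam hf0 hf i).pow 2)) x
  have d2 : DifferentiableAt ℝ (fun y : ((i : Fin (m+1)) × κ i) → ℝ =>
      G i (y ∘ Sigma.mk i) a b) x :=
    dAt (diff_blk (hGsm a b)) x
  have e1 : pd ⟨0,cc⟩ (fun y : ((i : Fin (m+1)) × κ i) → ℝ =>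
      (f i (y ∘ Sigma.mk 0))^2 * G i (y ∘ Sigma.mk i) a b) x
      = pd ⟨0,cc⟩ (fun y : ((i : Fin (m+1)) × κ i) → ℝ => (f i (y ∘ Sigma.mk 0))^2) x
          * G i (x ∘ Sigma.mk i) a b
        + (f i (x ∘ Sigma.mk 0))^2
          * pd ⟨0,cc⟩ (fun y : ((i : Fin (m+1)) × κ i) → ℝ => G i (y ∘ Sigma.mk i) a b) x :=
    pd_mul d1 d2 _
  rw [e1]
  have e3 : pd ⟨0,cc⟩ (fun y : ((i : Fin (m+1)) × κ i) → ℝ => G i (y ∘ Sigma.mk i) a b) x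
      = 0 :=
    pd_blk_ne (fun hc => hi hc.symm) (dAt (hGsm a b) _) cc
  have e2 : pd ⟨0,cc⟩ (fun y : ((i : Fin (m+1)) × κ i) → ℝ => (f i (y ∘ Sigma.mk 0))^2) x
      = 2 * f i (x ∘ Sigma.mk 0) * pd cc lam (x ∘ Sigma.mk 0) := by
    have e4 : pd ⟨0,cc⟩ (fun y : ((i : Fin (m+1)) × κ i) → ℝ => (f i (y ∘ Sigma.mk 0))^2) x
        = pd cc (fun z => (f i z)^2) (x ∘ Sigma.mk 0) :=
      pd_blk_same (dAt ((smooth_f hlam hf0 hf i).pow 2) _) cc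
    rw [e4]
    have e5 : pd cc (fun z => (f i z)^2) (x ∘ Sigma.mk 0)
        = pd cc (fun z => f i z * f i z) (x ∘ Sigma.mk 0) := by
      apply pd_congr; intro z; ring
    rw [e5, pd_mul (dAt (smooth_f hlam hf0 hf i) _) (dAt (smooth_f hlam hf0 hf i) _),
      pd_f hlam hf i hi]
    ring
  rw [e2, e3]; ring

include hlam hf0 hf in
/-- pd of a diagonal-block entry in an unrelated direction. -/
lemma pdW_other (i k : Fin (m+1)) (hk0 : k ≠ 0) (hki : k ≠ i) (a b : κ i) (cc : κ k)
    (hGsm : SmoothM (G i)) (x : ((i : Fin (m+1)) × κ i) → ℝ) :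
    pd ⟨k,cc⟩ (fun y => warpedMetric G f y ⟨i,a⟩ ⟨i,b⟩) x = 0 := by
  rw [pd_congr (fun y => warped_same G f y i a b) _ x]
  have d1 : DifferentiableAt ℝ (fun y : ((i : Fin (m+1)) × κ i) → ℝ =>
      (f i (y ∘ Sigma.mk 0))^2) x :=
    dAt (diff_blk ((smooth_f hlam hf0 hf i).pow 2)) x
  have d2 : DifferentiableAt ℝ (fun y : ((i : Fin (m+1)) × κ i) → ℝ =>
      G i (y ∘ Sigma.mk i) a b) x :=
    dAt (diff_blk (hGsm a b)) x
  have e1 : pd ⟨k,cc⟩ (fun y : ((i : Fin (m+1)) × κ i) → ℝ =>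
      (f i (y ∘ Sigma.mk 0))^2 * G i (y ∘ Sigma.mk i) a b) x
      = pd ⟨k,cc⟩ (fun y : ((i : Fin (m+1)) × κ i) → ℝ => (f i (y ∘ Sigma.mk 0))^2) x
          * G i (x ∘ Sigma.mk i) a b
        + (f i (x ∘ Sigma.mk 0))^2
          * pd ⟨k,cc⟩ (fun y : ((i : Fin (m+1)) × κ i) → ℝ => G i (y ∘ Sigma.mk i) a b) x :=
    pd_mul d1 d2 _
  rw [e1]
  have e2 : pd ⟨k,cc⟩ (fun y : ((i : Fin (m+1)) × κ i) → ℝ => (f i (y ∘ Sigma.mk 0))^2) x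
      = 0 :=
    pd_blk_ne hk0 (dAt ((smooth_f hlam hf0 hf i).pow 2) _) cc
  have e3 : pd ⟨k,cc⟩ (fun y : ((i : Fin (m+1)) × κ i) → ℝ => G i (y ∘ Sigma.mk i) a b) x
      = 0 :=
    pd_blk_ne hki (dAt (hGsm a b) _) cc
  rw [e2, e3]; ring

end PartC2
section PartC3
set_option maxHeartbeats 1000000
variable {m : ℕ} {κ : Fin (m + 1) → Type} [∀ i, Fintype (κ i)] [∀ i, DecidableEq (κ i)]
variable {G : ∀ i, (κ i → ℝ) → Matrix (κ i) (κ i) ℝ}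
variable {f : Fin (m + 1) → (κ 0 → ℝ) → ℝ}
variable {lam : (κ 0 → ℝ) → ℝ} {c : Fin (m + 1) → ℝ}
variable (hG : ∀ i, SmoothM (G i)) (hGs : ∀ i, SymM (G i)) (hGn : ∀ i, NondegM (G i))
variable (hlam : ContDiff ℝ (⊤ : ℕ∞) lam)
variable (hf0 : f 0 = fun _ => 1)
variable (hf : ∀ i, i ≠ 0 → f i = fun y => lam y + c i)
variable (hfne : ∀ i y, f i y ≠ 0)

include hGn hfne in
lemma christoffel_warped_red (l : Fin (m+1)) (d : κ l) (Q R : (i : Fin (m+1)) × κ i)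
    (x : ((i : Fin (m+1)) × κ i) → ℝ) :
    christoffel (warpedMetric G f) ⟨l,d⟩ Q R x
      = (1/2) * ∑ e, (((f l (x ∘ Sigma.mk 0))^2)⁻¹ * (G l (x ∘ Sigma.mk l))⁻¹ d e) *
          (pd Q (fun y => warpedMetric G f y R ⟨l,e⟩) x
           + pd R (fun y => warpedMetric G f y Q ⟨l,e⟩) x
           - pd ⟨l,e⟩ (fun y => warpedMetric G f y Q R) x) := by
  unfold christoffel
  rw [warped_inv_eq G f hGn hfne x, sumSigma]
  congr 1
  rw [Finset.sum_eq_single_of_mem l (Finset.mem_univ l)]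
  · apply Finset.sum_congr rfl
    intro e _
    rw [warpedInv_same]
  · intro l' _ hl'
    apply Finset.sum_eq_zero
    intro e _
    rw [warpedInv_ne G f x (p := ⟨l,d⟩) (q := ⟨l',e⟩) (fun hc => hl' hc.symm), zero_mul]

include hG hGn hlam hf0 hf hfne in
lemma CW1 (i : Fin (m+1)) (d a b : κ i) (x : ((i : Fin (m+1)) × κ i) → ℝ) :
    christoffel (warpedMetric G f) ⟨i,d⟩ ⟨i,a⟩ ⟨i,b⟩ x
      = christoffel (G i) d a b (x ∘ Sigma.mk i) := by
  rw [christoffel_warped_red hGn hfne]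
  unfold christoffel
  congr 1
  apply Finset.sum_congr rfl
  intro e _
  rw [pdW_same hlam hf0 hf i b e a (hG i) x,
      pdW_same hlam hf0 hf i a e b (hG i) x,
      pdW_same hlam hf0 hf i a b e (hG i) x]
  have h2 : (f i (x ∘ Sigma.mk 0))^2 ≠ 0 := pow_ne_zero 2 (hfne i _)
  have h3 : f i (x ∘ Sigma.mk 0) ≠ 0 := hfne i _
  field_simp

include hG hGn hlam hf0 hf hfne in
lemma CW2 (i : Fin (m+1)) (hi : i ≠ 0) (d : κ 0) (a b : κ i)
    (x : ((i : Fin (m+1)) × κ i) → ℝ) :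
    christoffel (warpedMetric G f) ⟨0,d⟩ ⟨i,a⟩ ⟨i,b⟩ x
      = -(f i (x ∘ Sigma.mk 0)) * grad0 (G 0) lam (x ∘ Sigma.mk 0) d
          * G i (x ∘ Sigma.mk i) a b := by
  rw [christoffel_warped_red hGn hfne]
  have hsum : ∀ e ∈ (Finset.univ : Finset (κ 0)),
      (((f 0 (x ∘ Sigma.mk 0))^2)⁻¹ * (G 0 (x ∘ Sigma.mk 0))⁻¹ d e) *
        (pd ⟨i,a⟩ (fun y => warpedMetric G f y ⟨i,b⟩ ⟨0,e⟩) x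
         + pd ⟨i,b⟩ (fun y => warpedMetric G f y ⟨i,a⟩ ⟨0,e⟩) x
         - pd ⟨0,e⟩ (fun y => warpedMetric G f y ⟨i,a⟩ ⟨i,b⟩) x)
      = (-2 * (f i (x ∘ Sigma.mk 0) * G i (x ∘ Sigma.mk i) a b)) *
          ((G 0 (x ∘ Sigma.mk 0))⁻¹ d e * pd e lam (x ∘ Sigma.mk 0)) := by
    intro e _
    rw [pdW_off (p := ⟨i,b⟩) (q := ⟨0,e⟩) hi ⟨i,a⟩ x,
        pdW_off (p := ⟨i,a⟩) (q := ⟨0,e⟩) hi ⟨i,b⟩ x,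
        pdW_zero hlam hf0 hf i hi a b e (hG i) x]
    have : f 0 (x ∘ Sigma.mk 0) = 1 := by rw [hf0]
    rw [this]
    norm_num
    ring
  rw [Finset.sum_congr rfl hsum, ← Finset.mul_sum]
  unfold grad0
  ring

include hG hGs hGn hlam hf0 hf hfne in
lemma CW3 (i : Fin (m+1)) (hi : i ≠ 0) (d b : κ i) (a : κ 0)
    (x : ((i : Fin (m+1)) × κ i) → ℝ) :
    christoffel (warpedMetric G f) ⟨i,d⟩ ⟨0,a⟩ ⟨i,b⟩ x
      = (f i (x ∘ Sigma.mk 0))⁻¹ * pd a lam (x ∘ Sigma.mk 0)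
          * (if b = d then 1 else 0) := by
  rw [christoffel_warped_red hGn hfne]
  have hginv_symm : ∀ p q : κ i,
      (G i (x ∘ Sigma.mk i))⁻¹ p q = (G i (x ∘ Sigma.mk i))⁻¹ q p := by
    intro p q
    have h1 : ((G i (x ∘ Sigma.mk i))⁻¹)ᵀ = (G i (x ∘ Sigma.mk i))⁻¹ := by
      rw [Matrix.transpose_nonsing_inv, hGs i]
    have := congrFun (congrFun h1 p) q
    rw [Matrix.transpose_apply] at this
    exact this.symm
  have hsum : ∀ e ∈ (Finset.univ : Finset (κ i)),
      (((f i (x ∘ Sigma.mk 0))^2)⁻¹ * (G i (x ∘ Sigma.mk i))⁻¹ d e) *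
        (pd ⟨0,a⟩ (fun y => warpedMetric G f y ⟨i,b⟩ ⟨i,e⟩) x
         + pd ⟨i,b⟩ (fun y => warpedMetric G f y ⟨0,a⟩ ⟨i,e⟩) x
         - pd ⟨i,e⟩ (fun y => warpedMetric G f y ⟨0,a⟩ ⟨i,b⟩) x)
      = (2 * ((f i (x ∘ Sigma.mk 0))^2)⁻¹ * f i (x ∘ Sigma.mk 0)
            * pd a lam (x ∘ Sigma.mk 0)) *
          (G i (x ∘ Sigma.mk i) b e * (G i (x ∘ Sigma.mk i))⁻¹ e d) := by
    intro e _
    rw [pdW_zero hlam hf0 hf i hi b e a (hG i) x,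
        pdW_off (p := ⟨0,a⟩) (q := ⟨i,e⟩) (fun hc => hi hc.symm) ⟨i,b⟩ x,
        pdW_off (p := ⟨0,a⟩) (q := ⟨i,b⟩) (fun hc => hi hc.symm) ⟨i,e⟩ x,
        hginv_symm d e]
    ring
  rw [Finset.sum_congr rfl hsum, ← Finset.mul_sum]
  have hmul : ∑ e, G i (x ∘ Sigma.mk i) b e * (G i (x ∘ Sigma.mk i))⁻¹ e d
      = if b = d then 1 else 0 := by
    have h1 : G i (x ∘ Sigma.mk i) * (G i (x ∘ Sigma.mk i))⁻¹ = 1 :=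
      Matrix.mul_nonsing_inv _ (isUnit_iff_ne_zero.mpr (hGn i _))
    have := congrFun (congrFun h1 b) d
    rw [Matrix.mul_apply] at this
    rw [this, Matrix.one_apply]
  rw [hmul]
  have h2 : f i (x ∘ Sigma.mk 0) ≠ 0 := hfne i _
  field_simp

include hG hGs hGn hlam hf0 hf hfne in
lemma CW3' (i : Fin (m+1)) (hi : i ≠ 0) (d b : κ i) (a : κ 0)
    (x : ((i : Fin (m+1)) × κ i) → ℝ) :
    christoffel (warpedMetric G f) ⟨i,d⟩ ⟨i,b⟩ ⟨0,a⟩ x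
      = (f i (x ∘ Sigma.mk 0))⁻¹ * pd a lam (x ∘ Sigma.mk 0)
          * (if b = d then 1 else 0) := by
  rw [christoffel_symm (warped_symm hGs)]
  exact CW3 hG hGs hGn hlam hf0 hf hfne i hi d b a x

end PartC3
section PartC4
set_option maxHeartbeats 1000000
variable {m : ℕ} {κ : Fin (m + 1) → Type} [∀ i, Fintype (κ i)] [∀ i, DecidableEq (κ i)]
variable {G : ∀ i, (κ i → ℝ) → Matrix (κ i) (κ i) ℝ}
variable {f : Fin (m + 1) → (κ 0 → ℝ) → ℝ}
variable {lam : (κ 0 → ℝ) → ℝ} {c : Fin (m + 1) → ℝ}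
variable (hG : ∀ i, SmoothM (G i)) (hGs : ∀ i, SymM (G i)) (hGn : ∀ i, NondegM (G i))
variable (hlam : ContDiff ℝ (⊤ : ℕ∞) lam)
variable (hf0 : f 0 = fun _ => 1)
variable (hf : ∀ i, i ≠ 0 → f i = fun y => lam y + c i)
variable (hfne : ∀ i y, f i y ≠ 0)

include hG hGn hlam hf0 hf hfne in
lemma CZ1 (i l : Fin (m+1)) (hl0 : l ≠ 0) (hli : l ≠ i) (d : κ l) (a b : κ i)
    (x : ((i : Fin (m+1)) × κ i) → ℝ) :
    christoffel (warpedMetric G f) ⟨l,d⟩ ⟨i,a⟩ ⟨i,b⟩ x = 0 := by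
  rw [christoffel_warped_red hGn hfne]
  rw [Finset.sum_eq_zero]
  · ring
  intro e _
  rw [pdW_off (p := ⟨i,b⟩) (q := ⟨l,e⟩) (fun hc => hli hc.symm) ⟨i,a⟩ x,
      pdW_off (p := ⟨i,a⟩) (q := ⟨l,e⟩) (fun hc => hli hc.symm) ⟨i,b⟩ x,
      pdW_other hlam hf0 hf i l hl0 hli a b e (hG i) x]
  ring

include hG hGn hlam hf0 hf hfne in
lemma CZ2 (i j l : Fin (m+1)) (hij : i ≠ j) (hi : i ≠ 0) (hj : j ≠ 0)
    (d : κ l) (a : κ i) (b : κ j) (x : ((i : Fin (m+1)) × κ i) → ℝ) :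
    christoffel (warpedMetric G f) ⟨l,d⟩ ⟨i,a⟩ ⟨j,b⟩ x = 0 := by
  rw [christoffel_warped_red hGn hfne]
  rw [Finset.sum_eq_zero]
  · ring
  intro e _
  have t3 : pd ⟨l,e⟩ (fun y => warpedMetric G f y ⟨i,a⟩ ⟨j,b⟩) x = 0 :=
    pdW_off (p := ⟨i,a⟩) (q := ⟨j,b⟩) hij ⟨l,e⟩ x
  have t1 : pd ⟨i,a⟩ (fun y => warpedMetric G f y ⟨j,b⟩ ⟨l,e⟩) x = 0 := by
    by_cases hjl : j = l
    · subst hjl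
      exact pdW_other hlam hf0 hf j i hi hij b e a (hG j) x
    · exact pdW_off (p := ⟨j,b⟩) (q := ⟨l,e⟩) hjl ⟨i,a⟩ x
  have t2 : pd ⟨j,b⟩ (fun y => warpedMetric G f y ⟨i,a⟩ ⟨l,e⟩) x = 0 := by
    by_cases hil : i = l
    · subst hil
      exact pdW_other hlam hf0 hf i j hj (fun hc => hij hc.symm) a e b (hG i) x
    · exact pdW_off (p := ⟨i,a⟩) (q := ⟨l,e⟩) hil ⟨j,b⟩ x
  rw [t1, t2, t3]
  ring

include hG hGn hlam hf0 hf hfne in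
lemma CZ3 (i l : Fin (m+1)) (hi : i ≠ 0) (hli : l ≠ i) (d : κ l) (a : κ 0) (b : κ i)
    (x : ((i : Fin (m+1)) × κ i) → ℝ) :
    christoffel (warpedMetric G f) ⟨l,d⟩ ⟨0,a⟩ ⟨i,b⟩ x = 0 := by
  rw [christoffel_warped_red hGn hfne]
  rw [Finset.sum_eq_zero]
  · ring
  intro e _
  have t1 : pd ⟨0,a⟩ (fun y => warpedMetric G f y ⟨i,b⟩ ⟨l,e⟩) x = 0 :=
    pdW_off (p := ⟨i,b⟩) (q := ⟨l,e⟩) (fun hc => hli hc.symm) ⟨0,a⟩ x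
  have t2 : pd ⟨i,b⟩ (fun y => warpedMetric G f y ⟨0,a⟩ ⟨l,e⟩) x = 0 := by
    by_cases hl0 : (0 : Fin (m+1)) = l
    · subst hl0
      exact pdW_other hlam hf0 hf 0 i hi hi a e b (hG 0) x
    · exact pdW_off (p := ⟨0,a⟩) (q := ⟨l,e⟩) hl0 ⟨i,b⟩ x
  have t3 : pd ⟨l,e⟩ (fun y => warpedMetric G f y ⟨0,a⟩ ⟨i,b⟩) x = 0 :=
    pdW_off (p := ⟨0,a⟩) (q := ⟨i,b⟩) (fun hc => hi hc.symm) ⟨l,e⟩ x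
  rw [t1, t2, t3]
  ring

include hG hGs hGn hlam hf0 hf hfne in
lemma CZ3' (i l : Fin (m+1)) (hi : i ≠ 0) (hli : l ≠ i) (d : κ l) (a : κ 0) (b : κ i)
    (x : ((i : Fin (m+1)) × κ i) → ℝ) :
    christoffel (warpedMetric G f) ⟨l,d⟩ ⟨i,b⟩ ⟨0,a⟩ x = 0 := by
  rw [christoffel_symm (warped_symm hGs)]
  exact CZ3 hG hGn hlam hf0 hf hfne i l hi hli d a b x

end PartC4
section PartD
set_option maxHeartbeats 1000000
variable {ι : Type} [Fintype ι] [DecidableEq ι]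
variable {g : (ι → ℝ) → Matrix ι ι ℝ} {lam : (ι → ℝ) → ℝ}

lemma entry_symm (hsym : SymM g) (y : ι → ℝ) (p q : ι) : g y p q = g y q p := by
  have := congrFun (congrFun (hsym y) q) p
  rw [Matrix.transpose_apply] at this
  exact this

lemma gmul_inv (hn : NondegM g) (y : ι → ℝ) (a l : ι) :
    ∑ e, g y a e * (g y)⁻¹ e l = if l = a then 1 else 0 := by
  have h1 := congrFun (congrFun (Matrix.mul_nonsing_inv (g y)
    (isUnit_iff_ne_zero.mpr (hn y))) a) l
  rw [Matrix.mul_apply] at h1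
  rw [h1, Matrix.one_apply]
  by_cases h : a = l
  · simp [h]
  · have h' : ¬ l = a := fun hc => h hc.symm
    simp [h, h']

lemma smooth_grad {ι : Type} [Fintype ι] [DecidableEq ι]
    {g : (ι → ℝ) → Matrix ι ι ℝ} {lam : (ι → ℝ) → ℝ}
    (hs : SmoothM g) (hn : NondegM g) (hlam : ContDiff ℝ (⊤ : ℕ∞) lam) (d : ι) :
    ContDiff ℝ (⊤ : ℕ∞) (fun y => grad0 g lam y d) := by
  unfold grad0
  apply ContDiff.sum
  intro b _
  exact (smooth_inv_entry hs hn d b).mul (smooth_pd hlam b)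

lemma contract_delta {C : ι → ℝ} (a : ι) :
    ∑ l, (if l = a then (1:ℝ) else 0) * C l = C a := by
  simp only [ite_mul, one_mul, zero_mul]
  rw [Finset.sum_ite_eq' Finset.univ a C]
  simp

lemma lowered_christoffel (hn : NondegM g) (a b cc : ι) (y : ι → ℝ) :
    ∑ e, g y a e * christoffel g e b cc y
      = (1/2) * (pd b (fun z => g z cc a) y + pd cc (fun z => g z b a) y
          - pd a (fun z => g z b cc) y) := by
  have step1 : ∀ e : ι, g y a e * christoffel g e b cc y
      = ∑ l, (g y a e * (g y)⁻¹ e l) * ((1/2) * (pd b (fun z => g z cc l) y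
          + pd cc (fun z => g z b l) y - pd l (fun z => g z b cc) y)) := by
    intro e
    unfold christoffel
    rw [Finset.mul_sum, Finset.mul_sum]
    apply Finset.sum_congr rfl
    intro l _
    ring
  rw [Finset.sum_congr rfl (fun e _ => step1 e), Finset.sum_comm]
  have step2 : ∀ l : ι,
      (∑ e, (g y a e * (g y)⁻¹ e l) * ((1/2) * (pd b (fun z => g z cc l) y
          + pd cc (fun z => g z b l) y - pd l (fun z => g z b cc) y)))
      = (if l = a then (1:ℝ) else 0) * ((1/2) * (pd b (fun z => g z cc l) y
          + pd cc (fun z => g z b l) y - pd l (fun z => g z b cc) y)) := by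
    intro l
    rw [← Finset.sum_mul, gmul_inv hn y a l]
  rw [Finset.sum_congr rfl (fun l _ => step2 l), contract_delta a]

lemma dlam (hn : NondegM g) (cc : ι) (y : ι → ℝ) :
    pd cc lam y = ∑ l, g y cc l * grad0 g lam y l := by
  have step1 : ∀ l : ι, g y cc l * grad0 g lam y l
      = ∑ b, (g y cc l * (g y)⁻¹ l b) * pd b lam y := by
    intro l
    unfold grad0
    rw [Finset.mul_sum]
    apply Finset.sum_congr rfl
    intro b _
    ring
  rw [Finset.sum_congr rfl (fun l _ => step1 l), Finset.sum_comm]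
  have step2 : ∀ b : ι, (∑ l, (g y cc l * (g y)⁻¹ l b) * pd b lam y)
      = (if b = cc then (1:ℝ) else 0) * pd b lam y := by
    intro b
    rw [← Finset.sum_mul, gmul_inv hn y cc b]
  rw [Finset.sum_congr rfl (fun b _ => step2 b), contract_delta cc]

lemma null_contr (hn : NondegM g)
    (hnull : ∀ y, (∑ a, ∑ b, (g y)⁻¹ a b * pd a lam y * pd b lam y) = 0)
    (y : ι → ℝ) :
    ∑ e, pd e lam y * grad0 g lam y e = 0 := by
  have step1 : ∀ e : ι, pd e lam y * grad0 g lam y e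
      = ∑ b, (g y)⁻¹ e b * pd e lam y * pd b lam y := by
    intro e
    unfold grad0
    rw [Finset.mul_sum]
    apply Finset.sum_congr rfl
    intro b _
    ring
  rw [Finset.sum_congr rfl (fun e _ => step1 e)]
  exact hnull y

lemma pd_grad_of_par {g : (ι → ℝ) → Matrix ι ι ℝ} {lam : (ι → ℝ) → ℝ}
    (hpar : ∀ k l y, covDerVF g (grad0 g lam) k l y = 0) (a l : ι) (y : ι → ℝ) :
    pd a (fun z => grad0 g lam z l) y
      = -∑ e, christoffel g l a e y * grad0 g lam y e := by
  have := hpar a l y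
  unfold covDerVF at this
  linarith

lemma pd_swap (hlam : ContDiff ℝ (⊤ : ℕ∞) lam) (a b : ι) (y : ι → ℝ) :
    pd a (fun z => pd b lam z) y = pd b (fun z => pd a lam z) y := by
  have hsymm : IsSymmSndFDerivAt ℝ lam y :=
    (hlam.contDiffAt).isSymmSndFDerivAt (by rw [minSmoothness_of_isRCLikeNormedField]; exact WithTop.coe_le_coe.mpr (le_top : (2 : ℕ∞) ≤ ⊤))
  have hd : Differentiable ℝ (fderiv ℝ lam) :=
    (hlam.fderiv_right (m := (⊤ : ℕ∞)) (by simp)).differentiable (by simp)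
  have hred : ∀ u w : ι, pd u (fun z => pd w lam z) y
      = fderiv ℝ (fderiv ℝ lam) y (Pi.single u 1) (Pi.single w 1) := by
    intro u w
    have heq : (fun z => pd w lam z)
        = (⇑(ContinuousLinearMap.apply ℝ ℝ (Pi.single w (1:ℝ)))) ∘ (fderiv ℝ lam) := rfl
    rw [pd, heq, fderiv_comp _
      ((ContinuousLinearMap.apply ℝ ℝ (Pi.single w (1:ℝ))).differentiableAt) (hd y)]
    rw [ContinuousLinearMap.fderiv]
    rfl
  rw [hred, hred, hsymm.eq]

lemma hessian_zero (hs : SmoothM g) (hsym : SymM g) (hn : NondegM g)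
    (hlam : ContDiff ℝ (⊤ : ℕ∞) lam)
    (hpar : ∀ k l y, covDerVF g (grad0 g lam) k l y = 0) (a cc : ι) (y : ι → ℝ) :
    pd a (fun z => pd cc lam z) y = ∑ e, christoffel g e a cc y * pd e lam y := by
  -- expand LHS via dlam
  have e1 : pd a (fun z => pd cc lam z) y
      = ∑ l, (pd a (fun z => g z cc l) y * grad0 g lam y l
              + g y cc l * pd a (fun z => grad0 g lam z l) y) := by
    rw [pd_congr (fun z => dlam hn cc z) a y]
    rw [pd_sum (fun l _ => ((hs cc l).mul (smooth_grad hs hn hlam l)).differentiable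
        (by simp) y) a]
    apply Finset.sum_congr rfl
    intro l _
    exact pd_mul ((hs cc l).differentiable (by simp) y)
      ((smooth_grad hs hn hlam l).differentiable (by simp) y) a
  rw [e1]
  have pdsym : ∀ k p q : ι, pd k (fun z => g z p q) y = pd k (fun z => g z q p) y :=
    fun k p q => pd_congr (fun z => entry_symm hsym z p q) k y
  have e2 : ∀ l : ι, g y cc l * pd a (fun z => grad0 g lam z l) y
      = -∑ e, (g y cc l * christoffel g l a e y) * grad0 g lam y e := by
    intro l
    rw [pd_grad_of_par hpar a l y, mul_neg, Finset.mul_sum]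
    congr 1
    exact Finset.sum_congr rfl fun e _ => by ring
  rw [Finset.sum_congr rfl (fun l (_ : l ∈ Finset.univ) => by rw [e2 l]),
      Finset.sum_add_distrib]
  have e3 : (∑ l, -∑ e, (g y cc l * christoffel g l a e y) * grad0 g lam y e)
      = -∑ e, ((1/2) * (pd a (fun z => g z e cc) y + pd e (fun z => g z a cc) y
          - pd cc (fun z => g z a e) y)) * grad0 g lam y e := by
    rw [Finset.sum_neg_distrib]
    congr 1
    rw [Finset.sum_comm]
    apply Finset.sum_congr rfl
    intro e _
    rw [← Finset.sum_mul, lowered_christoffel hn cc a e y]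
  rw [e3]
  have eR : ∑ e, christoffel g e a cc y * pd e lam y
      = ∑ l, ((1/2) * (pd a (fun z => g z cc l) y + pd cc (fun z => g z a l) y
          - pd l (fun z => g z a cc) y)) * grad0 g lam y l := by
    have h1 : ∀ e : ι, christoffel g e a cc y * pd e lam y
        = ∑ l, (g y e l * christoffel g e a cc y) * grad0 g lam y l := by
      intro e
      rw [dlam hn e y, Finset.mul_sum]
      exact Finset.sum_congr rfl fun l _ => by ring
    rw [Finset.sum_congr rfl (fun e (_ : e ∈ Finset.univ) => h1 e), Finset.sum_comm]
    apply Finset.sum_congr rfl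
    intro l _
    rw [← Finset.sum_mul]
    have h2 : ∑ e, g y e l * christoffel g e a cc y
        = ∑ e, g y l e * christoffel g e a cc y :=
      Finset.sum_congr rfl fun e _ => by rw [entry_symm hsym y e l]
    rw [h2, lowered_christoffel hn l a cc y]
  rw [eR, ← sub_eq_add_neg, sub_eq_iff_eq_add, ← Finset.sum_add_distrib]
  apply Finset.sum_congr rfl
  intro l _
  rw [pdsym a l cc]
  ring
end PartD
section PartE1
set_option maxHeartbeats 1000000
variable {m : ℕ} {κ : Fin (m + 1) → Type} [∀ i, Fintype (κ i)] [∀ i, DecidableEq (κ i)]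
variable {G : ∀ i, (κ i → ℝ) → Matrix (κ i) (κ i) ℝ}
variable {f : Fin (m + 1) → (κ 0 → ℝ) → ℝ}
variable {lam : (κ 0 → ℝ) → ℝ} {c : Fin (m + 1) → ℝ}
variable (hG : ∀ i, SmoothM (G i)) (hGs : ∀ i, SymM (G i)) (hGn : ∀ i, NondegM (G i))
variable (hlam : ContDiff ℝ (⊤ : ℕ∞) lam)
variable (hf0 : f 0 = fun _ => 1)
variable (hf : ∀ i, i ≠ 0 → f i = fun y => lam y + c i)
variable (hfne : ∀ i y, f i y ≠ 0)
variable (hgradnull : ∀ y, (∑ a, ∑ b, (G 0 y)⁻¹ a b * pd a lam y * pd b lam y) = 0)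

lemma riem_antisymm {ι : Type} [Fintype ι] [DecidableEq ι]
    (g : (ι → ℝ) → Matrix ι ι ℝ) (l i j k : ι) (x : ι → ℝ) :
    riem g l i j k x = -riem g l j i k x := by
  unfold riem
  ring

include hG hGs hGn hlam hf0 hf hfne hgradnull in
lemma quad_iii (i : Fin (m+1)) (d a b c' : κ i) (x : ((i : Fin (m+1)) × κ i) → ℝ) :
    (∑ p : (j : Fin (m+1)) × κ j,
        christoffel (warpedMetric G f) ⟨i,d⟩ ⟨i,a⟩ p x
          * christoffel (warpedMetric G f) p ⟨i,b⟩ ⟨i,c'⟩ x)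
      = ∑ e, christoffel (G i) d a e (x ∘ Sigma.mk i)
          * christoffel (G i) e b c' (x ∘ Sigma.mk i) := by
  rw [sumSigma]
  rw [Finset.sum_eq_single_of_mem i (Finset.mem_univ i)]
  · apply Finset.sum_congr rfl
    intro e _
    rw [CW1 hG hGn hlam hf0 hf hfne i d a e x, CW1 hG hGn hlam hf0 hf hfne i e b c' x]
  · intro l _ hl
    by_cases hl0 : l = 0
    · subst hl0
      have hi0 : i ≠ 0 := fun hc => hl (hc.symm ▸ rfl)
      have hterm : ∀ e ∈ (Finset.univ : Finset (κ 0)),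
          christoffel (warpedMetric G f) ⟨i,d⟩ ⟨i,a⟩ ⟨0,e⟩ x
            * christoffel (warpedMetric G f) ⟨0,e⟩ ⟨i,b⟩ ⟨i,c'⟩ x
          = (((f i (x ∘ Sigma.mk 0))⁻¹ * (if a = d then (1:ℝ) else 0))
              * (-(f i (x ∘ Sigma.mk 0)) * G i (x ∘ Sigma.mk i) b c'))
            * (pd e lam (x ∘ Sigma.mk 0) * grad0 (G 0) lam (x ∘ Sigma.mk 0) e) := by
        intro e _
        rw [CW3' hG hGs hGn hlam hf0 hf hfne i hi0 d a e x,
            CW2 hG hGn hlam hf0 hf hfne i hi0 e b c' x]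
        ring
      rw [Finset.sum_congr rfl hterm, ← Finset.mul_sum,
          null_contr (hGn 0) hgradnull (x ∘ Sigma.mk 0), mul_zero]
    · apply Finset.sum_eq_zero
      intro e _
      rw [CZ1 hG hGn hlam hf0 hf hfne i l hl0 hl e b c' x, mul_zero]

include hG hGs hGn hlam hf0 hf hfne hgradnull in
lemma R1 (i : Fin (m+1)) (d a b c' : κ i) (x : ((i : Fin (m+1)) × κ i) → ℝ) :
    riem (warpedMetric G f) ⟨i,d⟩ ⟨i,a⟩ ⟨i,b⟩ ⟨i,c'⟩ x
      = riem (G i) d a b c' (x ∘ Sigma.mk i) := by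
  unfold riem
  rw [quad_iii hG hGs hGn hlam hf0 hf hfne hgradnull i d a b c' x,
      quad_iii hG hGs hGn hlam hf0 hf hfne hgradnull i d b a c' x]
  have t1 : pd ⟨i,a⟩ (christoffel (warpedMetric G f) ⟨i,d⟩ ⟨i,b⟩ ⟨i,c'⟩) x
      = pd a (christoffel (G i) d b c') (x ∘ Sigma.mk i) := by
    rw [pd_congr (fun y => CW1 hG hGn hlam hf0 hf hfne i d b c' y) ⟨i,a⟩ x]
    exact pd_blk_same (dAt (smooth_christoffel_G hG hGn i d b c') _) a
  have t2 : pd ⟨i,b⟩ (christoffel (warpedMetric G f) ⟨i,d⟩ ⟨i,a⟩ ⟨i,c'⟩) x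
      = pd b (christoffel (G i) d a c') (x ∘ Sigma.mk i) := by
    rw [pd_congr (fun y => CW1 hG hGn hlam hf0 hf hfne i d a c' y) ⟨i,b⟩ x]
    exact pd_blk_same (dAt (smooth_christoffel_G hG hGn i d a c') _) b
  rw [t1, t2]

end PartE1
section PartE2a
set_option maxHeartbeats 1000000
variable {m : ℕ} {κ : Fin (m + 1) → Type} [∀ i, Fintype (κ i)] [∀ i, DecidableEq (κ i)]
variable {G : ∀ i, (κ i → ℝ) → Matrix (κ i) (κ i) ℝ}
variable {f : Fin (m + 1) → (κ 0 → ℝ) → ℝ}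
variable {lam : (κ 0 → ℝ) → ℝ} {c : Fin (m + 1) → ℝ}
variable (hG : ∀ i, SmoothM (G i)) (hGs : ∀ i, SymM (G i)) (hGn : ∀ i, NondegM (G i))
variable (hlam : ContDiff ℝ (⊤ : ℕ∞) lam)
variable (hf0 : f 0 = fun _ => 1)
variable (hf : ∀ i, i ≠ 0 → f i = fun y => lam y + c i)
variable (hfne : ∀ i y, f i y ≠ 0)

include hG hGs hGn hlam hf0 hf hfne in
/-- `R(X_i, Y_i, Z_k)` components with upper index in a block `l ∉ {0,i}`, last index in
block `i`. -/
lemma R2a (i l : Fin (m+1)) (hl0 : l ≠ 0) (hli : l ≠ i) (d : κ l) (a b cc : κ i)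
    (x : ((i : Fin (m+1)) × κ i) → ℝ) :
    riem (warpedMetric G f) ⟨l,d⟩ ⟨i,a⟩ ⟨i,b⟩ ⟨i,cc⟩ x = 0 := by
  unfold riem
  have t1 : pd ⟨i,a⟩ (christoffel (warpedMetric G f) ⟨l,d⟩ ⟨i,b⟩ ⟨i,cc⟩) x = 0 := by
    rw [pd_congr (fun y => CZ1 hG hGn hlam hf0 hf hfne i l hl0 hli d b cc y) _ x,
        pd_const]
  have t2 : pd ⟨i,b⟩ (christoffel (warpedMetric G f) ⟨l,d⟩ ⟨i,a⟩ ⟨i,cc⟩) x = 0 := by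
    rw [pd_congr (fun y => CZ1 hG hGn hlam hf0 hf hfne i l hl0 hli d a cc y) _ x,
        pd_const]
  have hq : ∀ a' b' : κ i, (∑ p : (j : Fin (m+1)) × κ j,
      christoffel (warpedMetric G f) ⟨l,d⟩ ⟨i,a'⟩ p x
        * christoffel (warpedMetric G f) p ⟨i,b'⟩ ⟨i,cc⟩ x) = 0 := by
    intro a' b'
    rw [sumSigma]
    apply Finset.sum_eq_zero; intro l' _
    apply Finset.sum_eq_zero; intro e _
    by_cases hl'i : l' = i
    · subst hl'i
      rw [CZ1 hG hGn hlam hf0 hf hfne l' l hl0 hli d a' e x, zero_mul]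
    · by_cases hl'0 : l' = 0
      · subst hl'0
        have hi0 : i ≠ 0 := fun hc => hl'i (hc ▸ rfl)
        rw [CZ3' hG hGs hGn hlam hf0 hf hfne i l hi0 hli d e a' x, zero_mul]
      · rw [CZ1 hG hGn hlam hf0 hf hfne i l' hl'0 hl'i e b' cc x, mul_zero]
  rw [t1, t2, hq a b, hq b a]
  ring

include hG hGn hlam hf0 hf hfne in
/-- last index in a block `k ∉ {0, i}`. -/
lemma R2c3 (i k l : Fin (m+1)) (hi : i ≠ 0) (hk : k ≠ 0) (hik : i ≠ k)
    (d : κ l) (a b : κ i) (cc : κ k) (x : ((i : Fin (m+1)) × κ i) → ℝ) :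
    riem (warpedMetric G f) ⟨l,d⟩ ⟨i,a⟩ ⟨i,b⟩ ⟨k,cc⟩ x = 0 := by
  unfold riem
  have t1 : pd ⟨i,a⟩ (christoffel (warpedMetric G f) ⟨l,d⟩ ⟨i,b⟩ ⟨k,cc⟩) x = 0 := by
    rw [pd_congr (fun y => CZ2 hG hGn hlam hf0 hf hfne i k l hik hi hk d b cc y) _ x,
        pd_const]
  have t2 : pd ⟨i,b⟩ (christoffel (warpedMetric G f) ⟨l,d⟩ ⟨i,a⟩ ⟨k,cc⟩) x = 0 := by
    rw [pd_congr (fun y => CZ2 hG hGn hlam hf0 hf hfne i k l hik hi hk d a cc y) _ x,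
        pd_const]
  have hq : ∀ a' b' : κ i, (∑ p : (j : Fin (m+1)) × κ j,
      christoffel (warpedMetric G f) ⟨l,d⟩ ⟨i,a'⟩ p x
        * christoffel (warpedMetric G f) p ⟨i,b'⟩ ⟨k,cc⟩ x) = 0 := by
    intro a' b'
    rw [sumSigma]
    apply Finset.sum_eq_zero; intro l' _
    apply Finset.sum_eq_zero; intro e _
    rw [CZ2 hG hGn hlam hf0 hf hfne i k l' hik hi hk e b' cc x, mul_zero]
  rw [t1, t2, hq a b, hq b a]
  ring

include hG hGs hGn hlam hf0 hf hfne in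
/-- upper index in block `0`, other three in block `i ≠ 0`. -/
lemma R2b (i : Fin (m+1)) (hi : i ≠ 0) (d : κ 0) (a b cc : κ i)
    (x : ((i : Fin (m+1)) × κ i) → ℝ) :
    riem (warpedMetric G f) ⟨0,d⟩ ⟨i,a⟩ ⟨i,b⟩ ⟨i,cc⟩ x = 0 := by
  unfold riem
  have hF0 : ContDiff ℝ (⊤ : ℕ∞) (fun z : κ 0 → ℝ => -(f i z) * grad0 (G 0) lam z d) :=
    ((smooth_f hlam hf0 hf i).neg).mul (smooth_grad (hG 0) (hGn 0) hlam d)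
  have t : ∀ a' b' : κ i,
      pd ⟨i,a'⟩ (christoffel (warpedMetric G f) ⟨0,d⟩ ⟨i,b'⟩ ⟨i,cc⟩) x
      = (-(f i (x ∘ Sigma.mk 0)) * grad0 (G 0) lam (x ∘ Sigma.mk 0) d)
          * pd a' (fun z => G i z b' cc) (x ∘ Sigma.mk i) := by
    intro a' b'
    rw [pd_congr (fun y => CW2 hG hGn hlam hf0 hf hfne i hi d b' cc y) _ x]
    have d1 : DifferentiableAt ℝ (fun y : ((i : Fin (m+1)) × κ i) → ℝ =>
        -(f i (y ∘ Sigma.mk 0)) * grad0 (G 0) lam (y ∘ Sigma.mk 0) d) x :=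
      dAt (diff_blk hF0) x
    have d2 : DifferentiableAt ℝ (fun y : ((i : Fin (m+1)) × κ i) → ℝ =>
        G i (y ∘ Sigma.mk i) b' cc) x :=
      dAt (diff_blk (hG i b' cc)) x
    have e1 : pd ⟨i,a'⟩ (fun y : ((i : Fin (m+1)) × κ i) → ℝ =>
        -(f i (y ∘ Sigma.mk 0)) * grad0 (G 0) lam (y ∘ Sigma.mk 0) d
          * G i (y ∘ Sigma.mk i) b' cc) x
        = pd ⟨i,a'⟩ (fun y : ((i : Fin (m+1)) × κ i) → ℝ =>
            -(f i (y ∘ Sigma.mk 0)) * grad0 (G 0) lam (y ∘ Sigma.mk 0) d) x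
              * G i (x ∘ Sigma.mk i) b' cc
          + (-(f i (x ∘ Sigma.mk 0)) * grad0 (G 0) lam (x ∘ Sigma.mk 0) d)
              * pd ⟨i,a'⟩ (fun y : ((i : Fin (m+1)) × κ i) → ℝ =>
                  G i (y ∘ Sigma.mk i) b' cc) x :=
      pd_mul d1 d2 _
    have h0 : pd ⟨i,a'⟩ (fun y : ((i : Fin (m+1)) × κ i) → ℝ =>
        -(f i (y ∘ Sigma.mk 0)) * grad0 (G 0) lam (y ∘ Sigma.mk 0) d) x = 0 :=
      pd_blk_ne hi (dAt hF0 _) a'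
    have hsame : pd ⟨i,a'⟩ (fun y : ((i : Fin (m+1)) × κ i) → ℝ =>
        G i (y ∘ Sigma.mk i) b' cc) x = pd a' (fun z => G i z b' cc) (x ∘ Sigma.mk i) :=
      pd_blk_same (dAt (hG i b' cc) _) a'
    rw [e1, h0, hsame]
    ring
  have hq : ∀ a' b' : κ i, (∑ p : (j : Fin (m+1)) × κ j,
      christoffel (warpedMetric G f) ⟨0,d⟩ ⟨i,a'⟩ p x
        * christoffel (warpedMetric G f) p ⟨i,b'⟩ ⟨i,cc⟩ x)
      = (-(f i (x ∘ Sigma.mk 0)) * grad0 (G 0) lam (x ∘ Sigma.mk 0) d) *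
          ∑ e, G i (x ∘ Sigma.mk i) a' e * christoffel (G i) e b' cc (x ∘ Sigma.mk i) := by
    intro a' b'
    rw [sumSigma, Finset.sum_eq_single_of_mem i (Finset.mem_univ i)]
    · rw [Finset.mul_sum]
      apply Finset.sum_congr rfl
      intro e _
      rw [CW2 hG hGn hlam hf0 hf hfne i hi d a' e x,
          CW1 hG hGn hlam hf0 hf hfne i e b' cc x]
      ring
    · intro l' _ hl'
      apply Finset.sum_eq_zero
      intro e _
      by_cases hl'0 : l' = 0
      · subst hl'0
        rw [CZ3' hG hGs hGn hlam hf0 hf hfne i 0 hi (fun hc => hi hc.symm) d e a' x,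
            zero_mul]
      · rw [CZ1 hG hGn hlam hf0 hf hfne i l' hl'0 hl' e b' cc x, mul_zero]
  rw [t a b, t b a, hq a b, hq b a,
      lowered_christoffel (hGn i) a b cc (x ∘ Sigma.mk i),
      lowered_christoffel (hGn i) b a cc (x ∘ Sigma.mk i)]
  have psym : ∀ k p q : κ i, pd k (fun z => G i z p q) (x ∘ Sigma.mk i)
      = pd k (fun z => G i z q p) (x ∘ Sigma.mk i) :=
    fun k p q => pd_congr (fun z => entry_symm (hGs i) z p q) k _
  rw [psym b cc a, psym cc b a, psym a cc b]
  ring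
end PartE2a
section PartE2b
set_option maxHeartbeats 1000000
variable {m : ℕ} {κ : Fin (m + 1) → Type} [∀ i, Fintype (κ i)] [∀ i, DecidableEq (κ i)]
variable {G : ∀ i, (κ i → ℝ) → Matrix (κ i) (κ i) ℝ}
variable {f : Fin (m + 1) → (κ 0 → ℝ) → ℝ}
variable {lam : (κ 0 → ℝ) → ℝ} {c : Fin (m + 1) → ℝ}
variable (hG : ∀ i, SmoothM (G i)) (hGs : ∀ i, SymM (G i)) (hGn : ∀ i, NondegM (G i))
variable (hlam : ContDiff ℝ (⊤ : ℕ∞) lam)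
variable (hf0 : f 0 = fun _ => 1)
variable (hf : ∀ i, i ≠ 0 → f i = fun y => lam y + c i)
variable (hfne : ∀ i y, f i y ≠ 0)

include hG hGs hGn hlam hf0 hf hfne in
/-- two middle indices in block `i ≠ 0`, last index in block `0`. -/
lemma R2c2 (i l : Fin (m+1)) (hi : i ≠ 0) (d : κ l) (a b : κ i) (cc : κ 0)
    (x : ((i : Fin (m+1)) × κ i) → ℝ) :
    riem (warpedMetric G f) ⟨l,d⟩ ⟨i,a⟩ ⟨i,b⟩ ⟨0,cc⟩ x = 0 := by
  by_cases hli : l = i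
  · subst hli
    unfold riem
    have hFsm : ∀ b' : κ l, ContDiff ℝ (⊤ : ℕ∞) (fun z : κ 0 → ℝ =>
        (f l z)⁻¹ * pd cc lam z * (if b' = d then (1:ℝ) else 0)) := fun b' =>
      (((smooth_f hlam hf0 hf l).inv (hfne l)).mul (smooth_pd hlam cc)).mul contDiff_const
    have t : ∀ a' b' : κ l,
        pd ⟨l,a'⟩ (christoffel (warpedMetric G f) ⟨l,d⟩ ⟨l,b'⟩ ⟨0,cc⟩) x = 0 := by
      intro a' b'
      rw [pd_congr (fun y => CW3' hG hGs hGn hlam hf0 hf hfne l hi d b' cc y) _ x]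
      exact pd_blk_ne hi (dAt (hFsm b') _) a'
    have hq : ∀ a' b' : κ l, (∑ p : (j : Fin (m+1)) × κ j,
        christoffel (warpedMetric G f) ⟨l,d⟩ ⟨l,a'⟩ p x
          * christoffel (warpedMetric G f) p ⟨l,b'⟩ ⟨0,cc⟩ x)
        = christoffel (G l) d a' b' (x ∘ Sigma.mk l)
            * ((f l (x ∘ Sigma.mk 0))⁻¹ * pd cc lam (x ∘ Sigma.mk 0)) := by
      intro a' b'
      rw [sumSigma, Finset.sum_eq_single_of_mem l (Finset.mem_univ l)]
      · have hrow : ∀ e ∈ (Finset.univ : Finset (κ l)),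
            christoffel (warpedMetric G f) ⟨l,d⟩ ⟨l,a'⟩ ⟨l,e⟩ x
              * christoffel (warpedMetric G f) ⟨l,e⟩ ⟨l,b'⟩ ⟨0,cc⟩ x
            = christoffel (G l) d a' e (x ∘ Sigma.mk l)
                * ((f l (x ∘ Sigma.mk 0))⁻¹ * pd cc lam (x ∘ Sigma.mk 0)
                    * (if b' = e then 1 else 0)) := by
          intro e _
          rw [CW1 hG hGn hlam hf0 hf hfne l d a' e x,
              CW3' hG hGs hGn hlam hf0 hf hfne l hi e b' cc x]
        rw [Finset.sum_congr rfl hrow,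
            Finset.sum_eq_single_of_mem b' (Finset.mem_univ b')]
        · simp
        · intro e _ he
          simp [(show ¬ b' = e from fun hc => he hc.symm)]
      · intro l' _ hl'
        apply Finset.sum_eq_zero
        intro e _
        rw [CZ3' hG hGs hGn hlam hf0 hf hfne l l' hi hl' e cc b' x, mul_zero]
    rw [t a b, t b a, hq a b, hq b a, christoffel_symm (hGs l) d a b]
    ring
  · unfold riem
    have t : ∀ b' : κ i,
        (fun y => christoffel (warpedMetric G f) ⟨l,d⟩ ⟨i,b'⟩ ⟨0,cc⟩ y)
          = fun _ => (0:ℝ) := by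
      intro b'
      funext y
      exact CZ3' hG hGs hGn hlam hf0 hf hfne i l hi hli d cc b' y
    have t1 : pd ⟨i,a⟩ (christoffel (warpedMetric G f) ⟨l,d⟩ ⟨i,b⟩ ⟨0,cc⟩) x = 0 := by
      rw [pd_congr (fun y => CZ3' hG hGs hGn hlam hf0 hf hfne i l hi hli d cc b y) _ x,
          pd_const]
    have t2 : pd ⟨i,b⟩ (christoffel (warpedMetric G f) ⟨l,d⟩ ⟨i,a⟩ ⟨0,cc⟩) x = 0 := by
      rw [pd_congr (fun y => CZ3' hG hGs hGn hlam hf0 hf hfne i l hi hli d cc a y) _ x,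
          pd_const]
    by_cases hl0 : l = 0
    · subst hl0
      have hq : ∀ a' b' : κ i, (∑ p : (j : Fin (m+1)) × κ j,
          christoffel (warpedMetric G f) ⟨0,d⟩ ⟨i,a'⟩ p x
            * christoffel (warpedMetric G f) p ⟨i,b'⟩ ⟨0,cc⟩ x)
          = (-(f i (x ∘ Sigma.mk 0)) * grad0 (G 0) lam (x ∘ Sigma.mk 0) d
              * G i (x ∘ Sigma.mk i) a' b')
            * ((f i (x ∘ Sigma.mk 0))⁻¹ * pd cc lam (x ∘ Sigma.mk 0)) := by
        intro a' b'
        rw [sumSigma, Finset.sum_eq_single_of_mem i (Finset.mem_univ i)]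
        · have hrow : ∀ e ∈ (Finset.univ : Finset (κ i)),
              christoffel (warpedMetric G f) ⟨0,d⟩ ⟨i,a'⟩ ⟨i,e⟩ x
                * christoffel (warpedMetric G f) ⟨i,e⟩ ⟨i,b'⟩ ⟨0,cc⟩ x
              = (-(f i (x ∘ Sigma.mk 0)) * grad0 (G 0) lam (x ∘ Sigma.mk 0) d
                  * G i (x ∘ Sigma.mk i) a' e)
                * ((f i (x ∘ Sigma.mk 0))⁻¹ * pd cc lam (x ∘ Sigma.mk 0)
                    * (if b' = e then 1 else 0)) := by
            intro e _
            rw [CW2 hG hGn hlam hf0 hf hfne i hi d a' e x,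
                CW3' hG hGs hGn hlam hf0 hf hfne i hi e b' cc x]
          rw [Finset.sum_congr rfl hrow,
              Finset.sum_eq_single_of_mem b' (Finset.mem_univ b')]
          · simp
          · intro e _ he
            simp [(show ¬ b' = e from fun hc => he hc.symm)]
        · intro l' _ hl'
          apply Finset.sum_eq_zero
          intro e _
          rw [CZ3' hG hGs hGn hlam hf0 hf hfne i l' hi hl' e cc b' x, mul_zero]
      rw [t1, t2, hq a b, hq b a, entry_symm (hGs i) (x ∘ Sigma.mk i) a b]
      ring
    · have hq : ∀ a' b' : κ i, (∑ p : (j : Fin (m+1)) × κ j,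
          christoffel (warpedMetric G f) ⟨l,d⟩ ⟨i,a'⟩ p x
            * christoffel (warpedMetric G f) p ⟨i,b'⟩ ⟨0,cc⟩ x) = 0 := by
        intro a' b'
        rw [sumSigma]
        apply Finset.sum_eq_zero; intro l' _
        apply Finset.sum_eq_zero; intro e _
        by_cases hl'i : l' = i
        · subst hl'i
          rw [CZ1 hG hGn hlam hf0 hf hfne l' l hl0 hli d a' e x, zero_mul]
        · rw [CZ3' hG hGs hGn hlam hf0 hf hfne i l' hi hl'i e cc b' x, mul_zero]
      rw [t1, t2, hq a b, hq b a]
      ring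

include hG hGs hGn hlam hf0 hf hfne in
/-- two middle indices in block `0`, last index in block `k ≠ 0`. -/
lemma R2c1 (k l : Fin (m+1)) (hk : k ≠ 0) (d : κ l) (a b : κ 0) (cc : κ k)
    (x : ((i : Fin (m+1)) × κ i) → ℝ) :
    riem (warpedMetric G f) ⟨l,d⟩ ⟨0,a⟩ ⟨0,b⟩ ⟨k,cc⟩ x = 0 := by
  by_cases hlk : l = k
  · subst hlk
    unfold riem
    have t : ∀ a' b' : κ 0,
        pd ⟨0,a'⟩ (christoffel (warpedMetric G f) ⟨l,d⟩ ⟨0,b'⟩ ⟨l,cc⟩) x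
        = (-((f l (x ∘ Sigma.mk 0))^2)⁻¹ * pd a' lam (x ∘ Sigma.mk 0)
              * pd b' lam (x ∘ Sigma.mk 0)
            + (f l (x ∘ Sigma.mk 0))⁻¹
              * pd a' (fun z => pd b' lam z) (x ∘ Sigma.mk 0))
          * (if cc = d then 1 else 0) := by
      intro a' b'
      rw [pd_congr (fun y => CW3 hG hGs hGn hlam hf0 hf hfne l hk d cc b' y) _ x]
      have hFsm : ContDiff ℝ (⊤ : ℕ∞) (fun z : κ 0 → ℝ =>
          (f l z)⁻¹ * pd b' lam z * (if cc = d then (1:ℝ) else 0)) :=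
        (((smooth_f hlam hf0 hf l).inv (hfne l)).mul (smooth_pd hlam b')).mul
          contDiff_const
      have e0 : pd ⟨(0 : Fin (m+1)),a'⟩ (fun y : ((i : Fin (m+1)) × κ i) → ℝ =>
          (f l (y ∘ Sigma.mk 0))⁻¹ * pd b' lam (y ∘ Sigma.mk 0)
            * (if cc = d then 1 else 0)) x
          = pd a' (fun z => (f l z)⁻¹ * pd b' lam z * (if cc = d then 1 else 0))
              (x ∘ Sigma.mk 0) :=
        pd_blk_same (dAt hFsm _) a'
      rw [e0]
      have d1 : DifferentiableAt ℝ (fun z : κ 0 → ℝ => (f l z)⁻¹ * pd b' lam z)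
          (x ∘ Sigma.mk 0) :=
        dAt ((((smooth_f hlam hf0 hf l).inv (hfne l)).mul (smooth_pd hlam b'))) _
      have e1 : pd a' (fun z : κ 0 → ℝ =>
          (f l z)⁻¹ * pd b' lam z * (if cc = d then 1 else 0)) (x ∘ Sigma.mk 0)
          = pd a' (fun z : κ 0 → ℝ => (f l z)⁻¹ * pd b' lam z) (x ∘ Sigma.mk 0)
              * (if cc = d then 1 else 0)
            + ((f l (x ∘ Sigma.mk 0))⁻¹ * pd b' lam (x ∘ Sigma.mk 0))
              * pd a' (fun _ : κ 0 → ℝ => (if cc = d then (1:ℝ) else 0))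
                  (x ∘ Sigma.mk 0) :=
        pd_mul d1 (differentiableAt_const _) a'
      rw [e1, pd_const]
      have e2 : pd a' (fun z : κ 0 → ℝ => (f l z)⁻¹ * pd b' lam z) (x ∘ Sigma.mk 0)
          = pd a' (fun z : κ 0 → ℝ => (f l z)⁻¹) (x ∘ Sigma.mk 0)
              * pd b' lam (x ∘ Sigma.mk 0)
            + (f l (x ∘ Sigma.mk 0))⁻¹
              * pd a' (fun z => pd b' lam z) (x ∘ Sigma.mk 0) :=
        pd_mul (dAt ((smooth_f hlam hf0 hf l).inv (hfne l)) _)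
          (dAt (smooth_pd hlam b') _) a'
      rw [e2, pd_inv (dAt (smooth_f hlam hf0 hf l) _) (hfne l _) a',
          pd_f hlam hf l hk a' (x ∘ Sigma.mk 0)]
      ring
    have hq : ∀ a' b' : κ 0, (∑ p : (j : Fin (m+1)) × κ j,
        christoffel (warpedMetric G f) ⟨l,d⟩ ⟨0,a'⟩ p x
          * christoffel (warpedMetric G f) p ⟨0,b'⟩ ⟨l,cc⟩ x)
        = ((f l (x ∘ Sigma.mk 0))⁻¹ * pd a' lam (x ∘ Sigma.mk 0)
            * (if cc = d then 1 else 0))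
          * ((f l (x ∘ Sigma.mk 0))⁻¹ * pd b' lam (x ∘ Sigma.mk 0)) := by
      intro a' b'
      rw [sumSigma, Finset.sum_eq_single_of_mem l (Finset.mem_univ l)]
      · have hrow : ∀ e ∈ (Finset.univ : Finset (κ l)),
            christoffel (warpedMetric G f) ⟨l,d⟩ ⟨0,a'⟩ ⟨l,e⟩ x
              * christoffel (warpedMetric G f) ⟨l,e⟩ ⟨0,b'⟩ ⟨l,cc⟩ x
            = ((f l (x ∘ Sigma.mk 0))⁻¹ * pd a' lam (x ∘ Sigma.mk 0)
                * (if e = d then 1 else 0))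
              * ((f l (x ∘ Sigma.mk 0))⁻¹ * pd b' lam (x ∘ Sigma.mk 0)
                * (if cc = e then 1 else 0)) := by
          intro e _
          rw [CW3 hG hGs hGn hlam hf0 hf hfne l hk d e a' x,
              CW3 hG hGs hGn hlam hf0 hf hfne l hk e cc b' x]
        rw [Finset.sum_congr rfl hrow,
            Finset.sum_eq_single_of_mem cc (Finset.mem_univ cc)]
        · simp
        · intro e _ he
          simp [(show ¬ cc = e from fun hc => he hc.symm)]
      · intro l' _ hl'
        apply Finset.sum_eq_zero
        intro e _
        rw [CZ3 hG hGn hlam hf0 hf hfne l l' hk hl' e b' cc x, mul_zero]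
    rw [t a b, t b a, hq a b, hq b a, pd_swap hlam a b (x ∘ Sigma.mk 0)]
    ring
  · unfold riem
    have t1 : pd ⟨0,a⟩ (christoffel (warpedMetric G f) ⟨l,d⟩ ⟨0,b⟩ ⟨k,cc⟩) x = 0 := by
      rw [pd_congr (fun y => CZ3 hG hGn hlam hf0 hf hfne k l hk hlk d b cc y) _ x,
          pd_const]
    have t2 : pd ⟨0,b⟩ (christoffel (warpedMetric G f) ⟨l,d⟩ ⟨0,a⟩ ⟨k,cc⟩) x = 0 := by
      rw [pd_congr (fun y => CZ3 hG hGn hlam hf0 hf hfne k l hk hlk d a cc y) _ x,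
          pd_const]
    have hq : ∀ a' b' : κ 0, (∑ p : (j : Fin (m+1)) × κ j,
        christoffel (warpedMetric G f) ⟨l,d⟩ ⟨0,a'⟩ p x
          * christoffel (warpedMetric G f) p ⟨0,b'⟩ ⟨k,cc⟩ x) = 0 := by
      intro a' b'
      rw [sumSigma]
      apply Finset.sum_eq_zero; intro l' _
      apply Finset.sum_eq_zero; intro e _
      by_cases hl'k : l' = k
      · subst hl'k
        rw [CZ3 hG hGn hlam hf0 hf hfne l' l hk hlk d a' e x, zero_mul]
      · rw [CZ3 hG hGn hlam hf0 hf hfne k l' hk hl'k e b' cc x, mul_zero]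
    rw [t1, t2, hq a b, hq b a]
    ring
end PartE2b
section PartE3a
set_option maxHeartbeats 1000000
variable {m : ℕ} {κ : Fin (m + 1) → Type} [∀ i, Fintype (κ i)] [∀ i, DecidableEq (κ i)]
variable {G : ∀ i, (κ i → ℝ) → Matrix (κ i) (κ i) ℝ}
variable {f : Fin (m + 1) → (κ 0 → ℝ) → ℝ}
variable {lam : (κ 0 → ℝ) → ℝ} {c : Fin (m + 1) → ℝ}
variable (hG : ∀ i, SmoothM (G i)) (hGs : ∀ i, SymM (G i)) (hGn : ∀ i, NondegM (G i))
variable (hlam : ContDiff ℝ (⊤ : ℕ∞) lam)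
variable (hf0 : f 0 = fun _ => 1)
variable (hf : ∀ i, i ≠ 0 → f i = fun y => lam y + c i)
variable (hfne : ∀ i y, f i y ≠ 0)
variable (hgradnull : ∀ y, (∑ a, ∑ b, (G 0 y)⁻¹ a b * pd a lam y * pd b lam y) = 0)

include hG hGs hGn hlam hf0 hf hfne hgradnull in
lemma R3a_j (i j l : Fin (m+1)) (hi : i ≠ 0) (hj : j ≠ 0) (hij : i ≠ j)
    (d : κ l) (a : κ i) (b cc : κ j) (x : ((i : Fin (m+1)) × κ i) → ℝ) :
    riem (warpedMetric G f) ⟨l,d⟩ ⟨i,a⟩ ⟨j,b⟩ ⟨j,cc⟩ x = 0 := by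
  unfold riem
  have t1 : pd ⟨i,a⟩ (christoffel (warpedMetric G f) ⟨l,d⟩ ⟨j,b⟩ ⟨j,cc⟩) x = 0 := by
    by_cases hlj : l = j
    · subst hlj
      rw [pd_congr (fun y => CW1 hG hGn hlam hf0 hf hfne l d b cc y) _ x]
      exact pd_blk_ne hij (dAt (smooth_christoffel_G hG hGn l d b cc) _) a
    · by_cases hl0 : l = 0
      · subst hl0
        rw [pd_congr (fun y => CW2 hG hGn hlam hf0 hf hfne j hj d b cc y) _ x]
        have hF0 : ContDiff ℝ (⊤ : ℕ∞) (fun z : κ 0 → ℝ => -(f j z) * grad0 (G 0) lam z d) :=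
          ((smooth_f hlam hf0 hf j).neg).mul (smooth_grad (hG 0) (hGn 0) hlam d)
        have d1 : DifferentiableAt ℝ (fun y : ((i : Fin (m+1)) × κ i) → ℝ =>
            -(f j (y ∘ Sigma.mk 0)) * grad0 (G 0) lam (y ∘ Sigma.mk 0) d) x :=
          dAt (diff_blk hF0) x
        have d2 : DifferentiableAt ℝ (fun y : ((i : Fin (m+1)) × κ i) → ℝ =>
            G j (y ∘ Sigma.mk j) b cc) x :=
          dAt (diff_blk (hG j b cc)) x
        have e1 : pd ⟨i,a⟩ (fun y : ((i : Fin (m+1)) × κ i) → ℝ =>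
            -(f j (y ∘ Sigma.mk 0)) * grad0 (G 0) lam (y ∘ Sigma.mk 0) d
              * G j (y ∘ Sigma.mk j) b cc) x
            = pd ⟨i,a⟩ (fun y : ((i : Fin (m+1)) × κ i) → ℝ =>
                -(f j (y ∘ Sigma.mk 0)) * grad0 (G 0) lam (y ∘ Sigma.mk 0) d) x
                  * G j (x ∘ Sigma.mk j) b cc
              + (-(f j (x ∘ Sigma.mk 0)) * grad0 (G 0) lam (x ∘ Sigma.mk 0) d)
                  * pd ⟨i,a⟩ (fun y : ((i : Fin (m+1)) × κ i) → ℝ =>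
                      G j (y ∘ Sigma.mk j) b cc) x :=
          pd_mul d1 d2 _
        rw [e1, pd_blk_ne hi (dAt hF0 _) a, pd_blk_ne hij (dAt (hG j b cc) _) a]
        ring
      · rw [pd_congr (fun y => CZ1 hG hGn hlam hf0 hf hfne j l hl0 hlj d b cc y) _ x,
            pd_const]
  have t2 : pd ⟨j,b⟩ (christoffel (warpedMetric G f) ⟨l,d⟩ ⟨i,a⟩ ⟨j,cc⟩) x = 0 := by
    rw [pd_congr (fun y => CZ2 hG hGn hlam hf0 hf hfne i j l hij hi hj d a cc y) _ x,
        pd_const]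
  have q1 : (∑ p : (j : Fin (m+1)) × κ j,
      christoffel (warpedMetric G f) ⟨l,d⟩ ⟨i,a⟩ p x
        * christoffel (warpedMetric G f) p ⟨j,b⟩ ⟨j,cc⟩ x) = 0 := by
    rw [sumSigma]
    apply Finset.sum_eq_zero; intro l' _
    by_cases hl'0 : l' = 0
    · subst hl'0
      by_cases hli : l = i
      · subst hli
        have hrow : ∀ e ∈ (Finset.univ : Finset (κ 0)),
            christoffel (warpedMetric G f) ⟨l,d⟩ ⟨l,a⟩ ⟨0,e⟩ x
              * christoffel (warpedMetric G f) ⟨0,e⟩ ⟨j,b⟩ ⟨j,cc⟩ x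
            = (((f l (x ∘ Sigma.mk 0))⁻¹ * (if a = d then (1:ℝ) else 0))
                * (-(f j (x ∘ Sigma.mk 0)) * G j (x ∘ Sigma.mk j) b cc))
              * (pd e lam (x ∘ Sigma.mk 0) * grad0 (G 0) lam (x ∘ Sigma.mk 0) e) := by
          intro e _
          rw [CW3' hG hGs hGn hlam hf0 hf hfne l hi d a e x,
              CW2 hG hGn hlam hf0 hf hfne j hj e b cc x]
          ring
        rw [Finset.sum_congr rfl hrow, ← Finset.mul_sum,
            null_contr (hGn 0) hgradnull (x ∘ Sigma.mk 0), mul_zero]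
      · apply Finset.sum_eq_zero
        intro e _
        rw [CZ3' hG hGs hGn hlam hf0 hf hfne i l hi hli d e a x, zero_mul]
    · apply Finset.sum_eq_zero
      intro e _
      by_cases hl'j : l' = j
      · subst hl'j
        rw [CZ2 hG hGn hlam hf0 hf hfne i l' l hij hi hl'0 d a e x, zero_mul]
      · rw [CZ1 hG hGn hlam hf0 hf hfne j l' hl'0 hl'j e b cc x, mul_zero]
  have q2 : (∑ p : (j : Fin (m+1)) × κ j,
      christoffel (warpedMetric G f) ⟨l,d⟩ ⟨j,b⟩ p x
        * christoffel (warpedMetric G f) p ⟨i,a⟩ ⟨j,cc⟩ x) = 0 := by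
    rw [sumSigma]
    apply Finset.sum_eq_zero; intro l' _
    apply Finset.sum_eq_zero; intro e _
    rw [CZ2 hG hGn hlam hf0 hf hfne i j l' hij hi hj e a cc x, mul_zero]
  rw [t1, t2, q1, q2]
  ring

include hG hGs hGn hlam hf0 hf hfne in
lemma R3a_0 (i j l : Fin (m+1)) (hi : i ≠ 0) (hj : j ≠ 0) (hij : i ≠ j)
    (d : κ l) (a : κ i) (b : κ j) (cc : κ 0) (x : ((i : Fin (m+1)) × κ i) → ℝ) :
    riem (warpedMetric G f) ⟨l,d⟩ ⟨i,a⟩ ⟨j,b⟩ ⟨0,cc⟩ x = 0 := by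
  unfold riem
  have t1 : pd ⟨i,a⟩ (christoffel (warpedMetric G f) ⟨l,d⟩ ⟨j,b⟩ ⟨0,cc⟩) x = 0 := by
    by_cases hlj : l = j
    · subst hlj
      rw [pd_congr (fun y => CW3' hG hGs hGn hlam hf0 hf hfne l hj d b cc y) _ x]
      exact pd_blk_ne hi (dAt ((((smooth_f hlam hf0 hf l).inv (hfne l)).mul
        (smooth_pd hlam cc)).mul contDiff_const) _) a
    · rw [pd_congr (fun y => CZ3' hG hGs hGn hlam hf0 hf hfne j l hj hlj d cc b y) _ x,
          pd_const]
  have t2 : pd ⟨j,b⟩ (christoffel (warpedMetric G f) ⟨l,d⟩ ⟨i,a⟩ ⟨0,cc⟩) x = 0 := by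
    by_cases hli : l = i
    · subst hli
      rw [pd_congr (fun y => CW3' hG hGs hGn hlam hf0 hf hfne l hi d a cc y) _ x]
      exact pd_blk_ne hj (dAt ((((smooth_f hlam hf0 hf l).inv (hfne l)).mul
        (smooth_pd hlam cc)).mul contDiff_const) _) b
    · rw [pd_congr (fun y => CZ3' hG hGs hGn hlam hf0 hf hfne i l hi hli d cc a y) _ x,
          pd_const]
  have q1 : (∑ p : (j : Fin (m+1)) × κ j,
      christoffel (warpedMetric G f) ⟨l,d⟩ ⟨i,a⟩ p x
        * christoffel (warpedMetric G f) p ⟨j,b⟩ ⟨0,cc⟩ x) = 0 := by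
    rw [sumSigma]
    apply Finset.sum_eq_zero; intro l' _
    apply Finset.sum_eq_zero; intro e _
    by_cases hl'j : l' = j
    · subst hl'j
      rw [CZ2 hG hGn hlam hf0 hf hfne i l' l hij hi hj d a e x, zero_mul]
    · rw [CZ3' hG hGs hGn hlam hf0 hf hfne j l' hj hl'j e cc b x, mul_zero]
  have q2 : (∑ p : (j : Fin (m+1)) × κ j,
      christoffel (warpedMetric G f) ⟨l,d⟩ ⟨j,b⟩ p x
        * christoffel (warpedMetric G f) p ⟨i,a⟩ ⟨0,cc⟩ x) = 0 := by
    rw [sumSigma]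
    apply Finset.sum_eq_zero; intro l' _
    apply Finset.sum_eq_zero; intro e _
    by_cases hl'i : l' = i
    · subst hl'i
      rw [CZ2 hG hGn hlam hf0 hf hfne j l' l (fun hc => hij hc.symm) hj hi d b e x,
          zero_mul]
    · rw [CZ3' hG hGs hGn hlam hf0 hf hfne i l' hi hl'i e cc a x, mul_zero]
  rw [t1, t2, q1, q2]
  ring

include hG hGs hGn hlam hf0 hf hfne in
lemma R3a_other (i j k l : Fin (m+1)) (hi : i ≠ 0) (hj : j ≠ 0) (hij : i ≠ j)
    (hk0 : k ≠ 0) (hki : k ≠ i) (hkj : k ≠ j)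
    (d : κ l) (a : κ i) (b : κ j) (cc : κ k) (x : ((i : Fin (m+1)) × κ i) → ℝ) :
    riem (warpedMetric G f) ⟨l,d⟩ ⟨i,a⟩ ⟨j,b⟩ ⟨k,cc⟩ x = 0 := by
  unfold riem
  have t1 : pd ⟨i,a⟩ (christoffel (warpedMetric G f) ⟨l,d⟩ ⟨j,b⟩ ⟨k,cc⟩) x = 0 := by
    rw [pd_congr (fun y => CZ2 hG hGn hlam hf0 hf hfne j k l
      (fun hc => hkj hc.symm) hj hk0 d b cc y) _ x, pd_const]
  have t2 : pd ⟨j,b⟩ (christoffel (warpedMetric G f) ⟨l,d⟩ ⟨i,a⟩ ⟨k,cc⟩) x = 0 := by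
    rw [pd_congr (fun y => CZ2 hG hGn hlam hf0 hf hfne i k l
      (fun hc => hki hc.symm) hi hk0 d a cc y) _ x, pd_const]
  have q1 : (∑ p : (j : Fin (m+1)) × κ j,
      christoffel (warpedMetric G f) ⟨l,d⟩ ⟨i,a⟩ p x
        * christoffel (warpedMetric G f) p ⟨j,b⟩ ⟨k,cc⟩ x) = 0 := by
    rw [sumSigma]
    apply Finset.sum_eq_zero; intro l' _
    apply Finset.sum_eq_zero; intro e _
    rw [CZ2 hG hGn hlam hf0 hf hfne j k l' (fun hc => hkj hc.symm) hj hk0 e b cc x,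
        mul_zero]
  have q2 : (∑ p : (j : Fin (m+1)) × κ j,
      christoffel (warpedMetric G f) ⟨l,d⟩ ⟨j,b⟩ p x
        * christoffel (warpedMetric G f) p ⟨i,a⟩ ⟨k,cc⟩ x) = 0 := by
    rw [sumSigma]
    apply Finset.sum_eq_zero; intro l' _
    apply Finset.sum_eq_zero; intro e _
    rw [CZ2 hG hGn hlam hf0 hf hfne i k l' (fun hc => hki hc.symm) hi hk0 e a cc x,
        mul_zero]
  rw [t1, t2, q1, q2]
  ring
end PartE3a
section PartE3b
set_option maxHeartbeats 1000000
variable {m : ℕ} {κ : Fin (m + 1) → Type} [∀ i, Fintype (κ i)] [∀ i, DecidableEq (κ i)]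
variable {G : ∀ i, (κ i → ℝ) → Matrix (κ i) (κ i) ℝ}
variable {f : Fin (m + 1) → (κ 0 → ℝ) → ℝ}
variable {lam : (κ 0 → ℝ) → ℝ} {c : Fin (m + 1) → ℝ}
variable (hG : ∀ i, SmoothM (G i)) (hGs : ∀ i, SymM (G i)) (hGn : ∀ i, NondegM (G i))
variable (hlam : ContDiff ℝ (⊤ : ℕ∞) lam)
variable (hf0 : f 0 = fun _ => 1)
variable (hf : ∀ i, i ≠ 0 → f i = fun y => lam y + c i)
variable (hfne : ∀ i y, f i y ≠ 0)
variable (hgradpar : ∀ k l y, covDerVF (G 0) (grad0 (G 0) lam) k l y = 0)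

include hG hGs hGn hlam hf0 hf hfne hgradpar in
lemma R3b_0 (j l : Fin (m+1)) (hj : j ≠ 0) (d : κ l) (a : κ 0) (b : κ j) (cc : κ 0)
    (x : ((i : Fin (m+1)) × κ i) → ℝ) :
    riem (warpedMetric G f) ⟨l,d⟩ ⟨0,a⟩ ⟨j,b⟩ ⟨0,cc⟩ x = 0 := by
  by_cases hlj : l = j
  · subst hlj
    unfold riem
    have hFsm : ContDiff ℝ (⊤ : ℕ∞) (fun z : κ 0 → ℝ =>
        (f l z)⁻¹ * pd cc lam z * (if b = d then (1:ℝ) else 0)) :=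
      (((smooth_f hlam hf0 hf l).inv (hfne l)).mul (smooth_pd hlam cc)).mul
        contDiff_const
    have t1 : pd ⟨(0 : Fin (m+1)),a⟩
        (christoffel (warpedMetric G f) ⟨l,d⟩ ⟨l,b⟩ ⟨0,cc⟩) x
        = (-((f l (x ∘ Sigma.mk 0))^2)⁻¹ * pd a lam (x ∘ Sigma.mk 0)
              * pd cc lam (x ∘ Sigma.mk 0)
            + (f l (x ∘ Sigma.mk 0))⁻¹
              * pd a (fun z => pd cc lam z) (x ∘ Sigma.mk 0))
          * (if b = d then 1 else 0) := by
      rw [pd_congr (fun y => CW3' hG hGs hGn hlam hf0 hf hfne l hj d b cc y) _ x]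
      have e0 : pd ⟨(0 : Fin (m+1)),a⟩ (fun y : ((i : Fin (m+1)) × κ i) → ℝ =>
          (f l (y ∘ Sigma.mk 0))⁻¹ * pd cc lam (y ∘ Sigma.mk 0)
            * (if b = d then 1 else 0)) x
          = pd a (fun z => (f l z)⁻¹ * pd cc lam z * (if b = d then 1 else 0))
              (x ∘ Sigma.mk 0) :=
        pd_blk_same (dAt hFsm _) a
      rw [e0]
      have d1 : DifferentiableAt ℝ (fun z : κ 0 → ℝ => (f l z)⁻¹ * pd cc lam z)
          (x ∘ Sigma.mk 0) :=
        dAt (((smooth_f hlam hf0 hf l).inv (hfne l)).mul (smooth_pd hlam cc)) _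
      have e1 : pd a (fun z : κ 0 → ℝ =>
          (f l z)⁻¹ * pd cc lam z * (if b = d then 1 else 0)) (x ∘ Sigma.mk 0)
          = pd a (fun z : κ 0 → ℝ => (f l z)⁻¹ * pd cc lam z) (x ∘ Sigma.mk 0)
              * (if b = d then 1 else 0)
            + ((f l (x ∘ Sigma.mk 0))⁻¹ * pd cc lam (x ∘ Sigma.mk 0))
              * pd a (fun _ : κ 0 → ℝ => (if b = d then (1:ℝ) else 0))
                  (x ∘ Sigma.mk 0) :=
        pd_mul d1 (differentiableAt_const _) a
      rw [e1, pd_const]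
      have e2 : pd a (fun z : κ 0 → ℝ => (f l z)⁻¹ * pd cc lam z) (x ∘ Sigma.mk 0)
          = pd a (fun z : κ 0 → ℝ => (f l z)⁻¹) (x ∘ Sigma.mk 0)
              * pd cc lam (x ∘ Sigma.mk 0)
            + (f l (x ∘ Sigma.mk 0))⁻¹
              * pd a (fun z => pd cc lam z) (x ∘ Sigma.mk 0) :=
        pd_mul (dAt ((smooth_f hlam hf0 hf l).inv (hfne l)) _)
          (dAt (smooth_pd hlam cc) _) a
      rw [e2, pd_inv (dAt (smooth_f hlam hf0 hf l) _) (hfne l _) a,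
          pd_f hlam hf l hj a (x ∘ Sigma.mk 0)]
      ring
    have t2 : pd ⟨l,b⟩ (christoffel (warpedMetric G f) ⟨l,d⟩ ⟨0,a⟩ ⟨0,cc⟩) x = 0 := by
      rw [pd_congr (fun y => CZ1 hG hGn hlam hf0 hf hfne 0 l hj hj d a cc y) _ x,
          pd_const]
    have q1 : (∑ p : (j : Fin (m+1)) × κ j,
        christoffel (warpedMetric G f) ⟨l,d⟩ ⟨0,a⟩ p x
          * christoffel (warpedMetric G f) p ⟨l,b⟩ ⟨0,cc⟩ x)
        = ((f l (x ∘ Sigma.mk 0))⁻¹ * pd a lam (x ∘ Sigma.mk 0)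
            * (if b = d then 1 else 0))
          * ((f l (x ∘ Sigma.mk 0))⁻¹ * pd cc lam (x ∘ Sigma.mk 0)) := by
      rw [sumSigma, Finset.sum_eq_single_of_mem l (Finset.mem_univ l)]
      · have hrow : ∀ e ∈ (Finset.univ : Finset (κ l)),
            christoffel (warpedMetric G f) ⟨l,d⟩ ⟨0,a⟩ ⟨l,e⟩ x
              * christoffel (warpedMetric G f) ⟨l,e⟩ ⟨l,b⟩ ⟨0,cc⟩ x
            = ((f l (x ∘ Sigma.mk 0))⁻¹ * pd a lam (x ∘ Sigma.mk 0)
                * (if e = d then 1 else 0))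
              * ((f l (x ∘ Sigma.mk 0))⁻¹ * pd cc lam (x ∘ Sigma.mk 0)
                * (if b = e then 1 else 0)) := by
          intro e _
          rw [CW3 hG hGs hGn hlam hf0 hf hfne l hj d e a x,
              CW3' hG hGs hGn hlam hf0 hf hfne l hj e b cc x]
        rw [Finset.sum_congr rfl hrow,
            Finset.sum_eq_single_of_mem b (Finset.mem_univ b)]
        · simp
        · intro e _ he
          simp [(show ¬ b = e from fun hc => he hc.symm)]
      · intro l' _ hl'
        apply Finset.sum_eq_zero
        intro e _
        rw [CZ3' hG hGs hGn hlam hf0 hf hfne l l' hj hl' e cc b x, mul_zero]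
    have q2 : (∑ p : (j : Fin (m+1)) × κ j,
        christoffel (warpedMetric G f) ⟨l,d⟩ ⟨l,b⟩ p x
          * christoffel (warpedMetric G f) p ⟨0,a⟩ ⟨0,cc⟩ x)
        = ((f l (x ∘ Sigma.mk 0))⁻¹ * (if b = d then 1 else 0))
          * pd a (fun z => pd cc lam z) (x ∘ Sigma.mk 0) := by
      rw [sumSigma, Finset.sum_eq_single_of_mem 0 (Finset.mem_univ 0)]
      · have hrow : ∀ e ∈ (Finset.univ : Finset (κ 0)),
            christoffel (warpedMetric G f) ⟨l,d⟩ ⟨l,b⟩ ⟨0,e⟩ x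
              * christoffel (warpedMetric G f) ⟨0,e⟩ ⟨0,a⟩ ⟨0,cc⟩ x
            = ((f l (x ∘ Sigma.mk 0))⁻¹ * (if b = d then 1 else 0))
              * (christoffel (G 0) e a cc (x ∘ Sigma.mk 0)
                  * pd e lam (x ∘ Sigma.mk 0)) := by
          intro e _
          rw [CW3' hG hGs hGn hlam hf0 hf hfne l hj d b e x,
              CW1 hG hGn hlam hf0 hf hfne 0 e a cc x]
          ring
        rw [Finset.sum_congr rfl hrow, ← Finset.mul_sum,
            ← hessian_zero (hG 0) (hGs 0) (hGn 0) hlam hgradpar a cc (x ∘ Sigma.mk 0)]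
      · intro l' _ hl'
        apply Finset.sum_eq_zero
        intro e _
        rw [CZ1 hG hGn hlam hf0 hf hfne 0 l' hl' hl' e a cc x, mul_zero]
    rw [t1, t2, q1, q2]
    have hfl : f l (x ∘ Sigma.mk 0) ≠ 0 := hfne l (x ∘ Sigma.mk 0)
    by_cases hbd : b = d
    · subst hbd
      simp only [if_pos rfl]
      field_simp
      ring
    · simp [hbd]
  · unfold riem
    have t1 : pd ⟨(0 : Fin (m+1)),a⟩
        (christoffel (warpedMetric G f) ⟨l,d⟩ ⟨j,b⟩ ⟨0,cc⟩) x = 0 := by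
      rw [pd_congr (fun y => CZ3' hG hGs hGn hlam hf0 hf hfne j l hj hlj d cc b y) _ x,
          pd_const]
    have t2 : pd ⟨j,b⟩ (christoffel (warpedMetric G f) ⟨l,d⟩ ⟨0,a⟩ ⟨0,cc⟩) x = 0 := by
      by_cases hl0 : l = 0
      · subst hl0
        rw [pd_congr (fun y => CW1 hG hGn hlam hf0 hf hfne 0 d a cc y) _ x]
        exact pd_blk_ne hj (dAt (smooth_christoffel_G hG hGn 0 d a cc) _) b
      · rw [pd_congr (fun y => CZ1 hG hGn hlam hf0 hf hfne 0 l hl0 hl0 d a cc y) _ x,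
            pd_const]
    have q1 : (∑ p : (j : Fin (m+1)) × κ j,
        christoffel (warpedMetric G f) ⟨l,d⟩ ⟨0,a⟩ p x
          * christoffel (warpedMetric G f) p ⟨j,b⟩ ⟨0,cc⟩ x) = 0 := by
      rw [sumSigma]
      apply Finset.sum_eq_zero; intro l' _
      apply Finset.sum_eq_zero; intro e _
      by_cases hl'j : l' = j
      · subst hl'j
        rw [CZ3 hG hGn hlam hf0 hf hfne l' l hj hlj d a e x, zero_mul]
      · rw [CZ3' hG hGs hGn hlam hf0 hf hfne j l' hj hl'j e cc b x, mul_zero]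
    have q2 : (∑ p : (j : Fin (m+1)) × κ j,
        christoffel (warpedMetric G f) ⟨l,d⟩ ⟨j,b⟩ p x
          * christoffel (warpedMetric G f) p ⟨0,a⟩ ⟨0,cc⟩ x) = 0 := by
      rw [sumSigma]
      apply Finset.sum_eq_zero; intro l' _
      apply Finset.sum_eq_zero; intro e _
      by_cases hl'0 : l' = 0
      · subst hl'0
        rw [CZ3' hG hGs hGn hlam hf0 hf hfne j l hj hlj d e b x, zero_mul]
      · rw [CZ1 hG hGn hlam hf0 hf hfne 0 l' hl'0 hl'0 e a cc x, mul_zero]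
    rw [t1, t2, q1, q2]
    ring
include hG hGs hGn hlam hf0 hf hfne hgradpar in
lemma R3b_j (j l : Fin (m+1)) (hj : j ≠ 0) (d : κ l) (a : κ 0) (b cc : κ j)
    (x : ((i : Fin (m+1)) × κ i) → ℝ) :
    riem (warpedMetric G f) ⟨l,d⟩ ⟨0,a⟩ ⟨j,b⟩ ⟨j,cc⟩ x = 0 := by
  by_cases hlj : l = j
  · subst hlj
    unfold riem
    have t1 : pd ⟨(0 : Fin (m+1)),a⟩
        (christoffel (warpedMetric G f) ⟨l,d⟩ ⟨l,b⟩ ⟨l,cc⟩) x = 0 := by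
      rw [pd_congr (fun y => CW1 hG hGn hlam hf0 hf hfne l d b cc y) _ x]
      exact pd_blk_ne (fun hc => hj hc.symm)
        (dAt (smooth_christoffel_G hG hGn l d b cc) _) a
    have t2 : pd ⟨l,b⟩ (christoffel (warpedMetric G f) ⟨l,d⟩ ⟨0,a⟩ ⟨l,cc⟩) x = 0 := by
      rw [pd_congr (fun y => CW3 hG hGs hGn hlam hf0 hf hfne l hj d cc a y) _ x]
      exact pd_blk_ne hj (dAt ((((smooth_f hlam hf0 hf l).inv (hfne l)).mul
        (smooth_pd hlam a)).mul contDiff_const) _) b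
    have q1 : (∑ p : (j : Fin (m+1)) × κ j,
        christoffel (warpedMetric G f) ⟨l,d⟩ ⟨0,a⟩ p x
          * christoffel (warpedMetric G f) p ⟨l,b⟩ ⟨l,cc⟩ x)
        = ((f l (x ∘ Sigma.mk 0))⁻¹ * pd a lam (x ∘ Sigma.mk 0))
          * christoffel (G l) d b cc (x ∘ Sigma.mk l) := by
      rw [sumSigma, Finset.sum_eq_single_of_mem l (Finset.mem_univ l)]
      · have hrow : ∀ e ∈ (Finset.univ : Finset (κ l)),
            christoffel (warpedMetric G f) ⟨l,d⟩ ⟨0,a⟩ ⟨l,e⟩ x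
              * christoffel (warpedMetric G f) ⟨l,e⟩ ⟨l,b⟩ ⟨l,cc⟩ x
            = ((f l (x ∘ Sigma.mk 0))⁻¹ * pd a lam (x ∘ Sigma.mk 0)
                * (if e = d then 1 else 0))
              * christoffel (G l) e b cc (x ∘ Sigma.mk l) := by
          intro e _
          rw [CW3 hG hGs hGn hlam hf0 hf hfne l hj d e a x,
              CW1 hG hGn hlam hf0 hf hfne l e b cc x]
        rw [Finset.sum_congr rfl hrow,
            Finset.sum_eq_single_of_mem d (Finset.mem_univ d)]
        · simp
        · intro e _ he
          simp [he]
      · intro l' _ hl'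
        apply Finset.sum_eq_zero
        intro e _
        by_cases hl'0 : l' = 0
        · subst hl'0
          rw [CZ1 hG hGn hlam hf0 hf hfne 0 l hj hj d a e x, zero_mul]
        · rw [CZ1 hG hGn hlam hf0 hf hfne l l' hl'0 hl' e b cc x, mul_zero]
    have q2 : (∑ p : (j : Fin (m+1)) × κ j,
        christoffel (warpedMetric G f) ⟨l,d⟩ ⟨l,b⟩ p x
          * christoffel (warpedMetric G f) p ⟨0,a⟩ ⟨l,cc⟩ x)
        = christoffel (G l) d b cc (x ∘ Sigma.mk l)
          * ((f l (x ∘ Sigma.mk 0))⁻¹ * pd a lam (x ∘ Sigma.mk 0)) := by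
      rw [sumSigma, Finset.sum_eq_single_of_mem l (Finset.mem_univ l)]
      · have hrow : ∀ e ∈ (Finset.univ : Finset (κ l)),
            christoffel (warpedMetric G f) ⟨l,d⟩ ⟨l,b⟩ ⟨l,e⟩ x
              * christoffel (warpedMetric G f) ⟨l,e⟩ ⟨0,a⟩ ⟨l,cc⟩ x
            = christoffel (G l) d b e (x ∘ Sigma.mk l)
              * ((f l (x ∘ Sigma.mk 0))⁻¹ * pd a lam (x ∘ Sigma.mk 0)
                  * (if cc = e then 1 else 0)) := by
          intro e _
          rw [CW1 hG hGn hlam hf0 hf hfne l d b e x,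
              CW3 hG hGs hGn hlam hf0 hf hfne l hj e cc a x]
        rw [Finset.sum_congr rfl hrow,
            Finset.sum_eq_single_of_mem cc (Finset.mem_univ cc)]
        · simp
        · intro e _ he
          simp [(show ¬ cc = e from fun hc => he hc.symm)]
      · intro l' _ hl'
        apply Finset.sum_eq_zero
        intro e _
        rw [CZ3 hG hGn hlam hf0 hf hfne l l' hj hl' e a cc x, mul_zero]
    rw [t1, t2, q1, q2]
    ring
  · by_cases hl0 : l = 0
    · subst hl0
      unfold riem
      have hF0 : ContDiff ℝ (⊤ : ℕ∞) (fun z : κ 0 → ℝ => -(f j z) * grad0 (G 0) lam z d) :=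
        ((smooth_f hlam hf0 hf j).neg).mul (smooth_grad (hG 0) (hGn 0) hlam d)
      have t1 : pd ⟨(0 : Fin (m+1)),a⟩
          (christoffel (warpedMetric G f) ⟨0,d⟩ ⟨j,b⟩ ⟨j,cc⟩) x
          = (-(pd a lam (x ∘ Sigma.mk 0)) * grad0 (G 0) lam (x ∘ Sigma.mk 0) d
              + -(f j (x ∘ Sigma.mk 0))
                * pd a (fun z => grad0 (G 0) lam z d) (x ∘ Sigma.mk 0))
            * G j (x ∘ Sigma.mk j) b cc := by
        rw [pd_congr (fun y => CW2 hG hGn hlam hf0 hf hfne j hj d b cc y) _ x]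
        have d1 : DifferentiableAt ℝ (fun y : ((i : Fin (m+1)) × κ i) → ℝ =>
            -(f j (y ∘ Sigma.mk 0)) * grad0 (G 0) lam (y ∘ Sigma.mk 0) d) x :=
          dAt (diff_blk hF0) x
        have d2 : DifferentiableAt ℝ (fun y : ((i : Fin (m+1)) × κ i) → ℝ =>
            G j (y ∘ Sigma.mk j) b cc) x :=
          dAt (diff_blk (hG j b cc)) x
        have e1 : pd ⟨(0 : Fin (m+1)),a⟩ (fun y : ((i : Fin (m+1)) × κ i) → ℝ =>
            -(f j (y ∘ Sigma.mk 0)) * grad0 (G 0) lam (y ∘ Sigma.mk 0) d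
              * G j (y ∘ Sigma.mk j) b cc) x
            = pd ⟨(0 : Fin (m+1)),a⟩ (fun y : ((i : Fin (m+1)) × κ i) → ℝ =>
                -(f j (y ∘ Sigma.mk 0)) * grad0 (G 0) lam (y ∘ Sigma.mk 0) d) x
                  * G j (x ∘ Sigma.mk j) b cc
              + (-(f j (x ∘ Sigma.mk 0)) * grad0 (G 0) lam (x ∘ Sigma.mk 0) d)
                  * pd ⟨(0 : Fin (m+1)),a⟩ (fun y : ((i : Fin (m+1)) × κ i) → ℝ =>
                      G j (y ∘ Sigma.mk j) b cc) x :=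
          pd_mul d1 d2 _
        rw [e1, pd_blk_ne (fun hc => hj hc.symm) (dAt (hG j b cc) _) a]
        have e2 : pd ⟨(0 : Fin (m+1)),a⟩ (fun y : ((i : Fin (m+1)) × κ i) → ℝ =>
            -(f j (y ∘ Sigma.mk 0)) * grad0 (G 0) lam (y ∘ Sigma.mk 0) d) x
            = pd a (fun z => -(f j z) * grad0 (G 0) lam z d) (x ∘ Sigma.mk 0) :=
          pd_blk_same (dAt hF0 _) a
        rw [e2]
        have e3 : pd a (fun z : κ 0 → ℝ => -(f j z) * grad0 (G 0) lam z d)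
            (x ∘ Sigma.mk 0)
            = pd a (fun z : κ 0 → ℝ => -(f j z)) (x ∘ Sigma.mk 0)
                * grad0 (G 0) lam (x ∘ Sigma.mk 0) d
              + -(f j (x ∘ Sigma.mk 0))
                * pd a (fun z => grad0 (G 0) lam z d) (x ∘ Sigma.mk 0) :=
          pd_mul ((dAt (smooth_f hlam hf0 hf j) _).neg)
            (dAt (smooth_grad (hG 0) (hGn 0) hlam d) _) a
        rw [e3, pd_neg, pd_f hlam hf j hj a (x ∘ Sigma.mk 0)]
        ring
      have t2 : pd ⟨j,b⟩ (christoffel (warpedMetric G f) ⟨0,d⟩ ⟨0,a⟩ ⟨j,cc⟩) x = 0 := by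
        rw [pd_congr (fun y => CZ3 hG hGn hlam hf0 hf hfne j 0 hj
          (fun hc => hj hc.symm) d a cc y) _ x, pd_const]
      have q1 : (∑ p : (j : Fin (m+1)) × κ j,
          christoffel (warpedMetric G f) ⟨0,d⟩ ⟨0,a⟩ p x
            * christoffel (warpedMetric G f) p ⟨j,b⟩ ⟨j,cc⟩ x)
          = (-(f j (x ∘ Sigma.mk 0)) * G j (x ∘ Sigma.mk j) b cc)
            * ∑ e, christoffel (G 0) d a e (x ∘ Sigma.mk 0)
                * grad0 (G 0) lam (x ∘ Sigma.mk 0) e := by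
        rw [sumSigma, Finset.sum_eq_single_of_mem 0 (Finset.mem_univ 0)]
        · rw [Finset.mul_sum]
          apply Finset.sum_congr rfl
          intro e _
          rw [CW1 hG hGn hlam hf0 hf hfne 0 d a e x,
              CW2 hG hGn hlam hf0 hf hfne j hj e b cc x]
          ring
        · intro l' _ hl'
          apply Finset.sum_eq_zero
          intro e _
          by_cases hl'j : l' = j
          · subst hl'j
            rw [CZ3 hG hGn hlam hf0 hf hfne l' 0 hj (fun hc => hj hc.symm) d a e x,
                zero_mul]
          · rw [CZ1 hG hGn hlam hf0 hf hfne j l' hl' hl'j e b cc x, mul_zero]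
      have q2 : (∑ p : (j : Fin (m+1)) × κ j,
          christoffel (warpedMetric G f) ⟨0,d⟩ ⟨j,b⟩ p x
            * christoffel (warpedMetric G f) p ⟨0,a⟩ ⟨j,cc⟩ x)
          = (-(f j (x ∘ Sigma.mk 0)) * grad0 (G 0) lam (x ∘ Sigma.mk 0) d
              * G j (x ∘ Sigma.mk j) b cc)
            * ((f j (x ∘ Sigma.mk 0))⁻¹ * pd a lam (x ∘ Sigma.mk 0)) := by
        rw [sumSigma, Finset.sum_eq_single_of_mem j (Finset.mem_univ j)]
        · have hrow : ∀ e ∈ (Finset.univ : Finset (κ j)),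
              christoffel (warpedMetric G f) ⟨0,d⟩ ⟨j,b⟩ ⟨j,e⟩ x
                * christoffel (warpedMetric G f) ⟨j,e⟩ ⟨0,a⟩ ⟨j,cc⟩ x
              = (-(f j (x ∘ Sigma.mk 0)) * grad0 (G 0) lam (x ∘ Sigma.mk 0) d
                  * G j (x ∘ Sigma.mk j) b e)
                * ((f j (x ∘ Sigma.mk 0))⁻¹ * pd a lam (x ∘ Sigma.mk 0)
                    * (if cc = e then 1 else 0)) := by
            intro e _
            rw [CW2 hG hGn hlam hf0 hf hfne j hj d b e x,
                CW3 hG hGs hGn hlam hf0 hf hfne j hj e cc a x]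
          rw [Finset.sum_congr rfl hrow,
              Finset.sum_eq_single_of_mem cc (Finset.mem_univ cc)]
          · simp
          · intro e _ he
            simp [(show ¬ cc = e from fun hc => he hc.symm)]
        · intro l' _ hl'
          apply Finset.sum_eq_zero
          intro e _
          rw [CZ3 hG hGn hlam hf0 hf hfne j l' hj hl' e a cc x, mul_zero]
      rw [t1, t2, q1, q2, pd_grad_of_par hgradpar a d (x ∘ Sigma.mk 0)]
      have hfj : f j (x ∘ Sigma.mk 0) ≠ 0 := hfne j (x ∘ Sigma.mk 0)
      field_simp
      ring
    · unfold riem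
      have t1 : pd ⟨(0 : Fin (m+1)),a⟩
          (christoffel (warpedMetric G f) ⟨l,d⟩ ⟨j,b⟩ ⟨j,cc⟩) x = 0 := by
        rw [pd_congr (fun y => CZ1 hG hGn hlam hf0 hf hfne j l hl0 hlj d b cc y) _ x,
            pd_const]
      have t2 : pd ⟨j,b⟩ (christoffel (warpedMetric G f) ⟨l,d⟩ ⟨0,a⟩ ⟨j,cc⟩) x = 0 := by
        rw [pd_congr (fun y => CZ3 hG hGn hlam hf0 hf hfne j l hj hlj d a cc y) _ x,
            pd_const]
      have q1 : (∑ p : (j : Fin (m+1)) × κ j,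
          christoffel (warpedMetric G f) ⟨l,d⟩ ⟨0,a⟩ p x
            * christoffel (warpedMetric G f) p ⟨j,b⟩ ⟨j,cc⟩ x) = 0 := by
        rw [sumSigma]
        apply Finset.sum_eq_zero; intro l' _
        apply Finset.sum_eq_zero; intro e _
        by_cases hl'j : l' = j
        · subst hl'j
          rw [CZ3 hG hGn hlam hf0 hf hfne l' l hj hlj d a e x, zero_mul]
        · by_cases hl'0 : l' = 0
          · subst hl'0
            rw [CZ1 hG hGn hlam hf0 hf hfne 0 l hl0 hl0 d a e x, zero_mul]
          · rw [CZ1 hG hGn hlam hf0 hf hfne j l' hl'0 hl'j e b cc x, mul_zero]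
      have q2 : (∑ p : (j : Fin (m+1)) × κ j,
          christoffel (warpedMetric G f) ⟨l,d⟩ ⟨j,b⟩ p x
            * christoffel (warpedMetric G f) p ⟨0,a⟩ ⟨j,cc⟩ x) = 0 := by
        rw [sumSigma]
        apply Finset.sum_eq_zero; intro l' _
        apply Finset.sum_eq_zero; intro e _
        by_cases hl'j : l' = j
        · subst hl'j
          rw [CZ1 hG hGn hlam hf0 hf hfne l' l hl0 hlj d b e x, zero_mul]
        · rw [CZ3 hG hGn hlam hf0 hf hfne j l' hj hl'j e a cc x, mul_zero]
      rw [t1, t2, q1, q2]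
      ring

include hG hGs hGn hlam hf0 hf hfne in
lemma R3b_other (j k l : Fin (m+1)) (hj : j ≠ 0) (hk : k ≠ 0) (hkj : k ≠ j)
    (d : κ l) (a : κ 0) (b : κ j) (cc : κ k) (x : ((i : Fin (m+1)) × κ i) → ℝ) :
    riem (warpedMetric G f) ⟨l,d⟩ ⟨0,a⟩ ⟨j,b⟩ ⟨k,cc⟩ x = 0 := by
  unfold riem
  have t1 : pd ⟨(0 : Fin (m+1)),a⟩
      (christoffel (warpedMetric G f) ⟨l,d⟩ ⟨j,b⟩ ⟨k,cc⟩) x = 0 := by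
    rw [pd_congr (fun y => CZ2 hG hGn hlam hf0 hf hfne j k l
      (fun hc => hkj hc.symm) hj hk d b cc y) _ x, pd_const]
  have t2 : pd ⟨j,b⟩ (christoffel (warpedMetric G f) ⟨l,d⟩ ⟨0,a⟩ ⟨k,cc⟩) x = 0 := by
    by_cases hlk : l = k
    · subst hlk
      rw [pd_congr (fun y => CW3 hG hGs hGn hlam hf0 hf hfne l hk d cc a y) _ x]
      exact pd_blk_ne hj (dAt ((((smooth_f hlam hf0 hf l).inv (hfne l)).mul
        (smooth_pd hlam a)).mul contDiff_const) _) b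
    · rw [pd_congr (fun y => CZ3 hG hGn hlam hf0 hf hfne k l hk hlk d a cc y) _ x,
          pd_const]
  have q1 : (∑ p : (j : Fin (m+1)) × κ j,
      christoffel (warpedMetric G f) ⟨l,d⟩ ⟨0,a⟩ p x
        * christoffel (warpedMetric G f) p ⟨j,b⟩ ⟨k,cc⟩ x) = 0 := by
    rw [sumSigma]
    apply Finset.sum_eq_zero; intro l' _
    apply Finset.sum_eq_zero; intro e _
    rw [CZ2 hG hGn hlam hf0 hf hfne j k l' (fun hc => hkj hc.symm) hj hk e b cc x,
        mul_zero]
  have q2 : (∑ p : (j : Fin (m+1)) × κ j,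
      christoffel (warpedMetric G f) ⟨l,d⟩ ⟨j,b⟩ p x
        * christoffel (warpedMetric G f) p ⟨0,a⟩ ⟨k,cc⟩ x) = 0 := by
    rw [sumSigma]
    apply Finset.sum_eq_zero; intro l' _
    apply Finset.sum_eq_zero; intro e _
    by_cases hl'k : l' = k
    · subst hl'k
      rw [CZ2 hG hGn hlam hf0 hf hfne j l' l (fun hc => hkj hc.symm) hj hk d b e x,
          zero_mul]
    · rw [CZ3 hG hGn hlam hf0 hf hfne k l' hk hl'k e a cc x, mul_zero]
  rw [t1, t2, q1, q2]
  ring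
end PartE3b
section PartF
set_option maxHeartbeats 1000000
variable {m : ℕ} {κ : Fin (m + 1) → Type} [∀ i, Fintype (κ i)] [∀ i, DecidableEq (κ i)]
variable {G : ∀ i, (κ i → ℝ) → Matrix (κ i) (κ i) ℝ}
variable {f : Fin (m + 1) → (κ 0 → ℝ) → ℝ}
variable {lam : (κ 0 → ℝ) → ℝ} {c : Fin (m + 1) → ℝ}
variable (hG : ∀ i, SmoothM (G i)) (hGs : ∀ i, SymM (G i)) (hGn : ∀ i, NondegM (G i))
variable (hlam : ContDiff ℝ (⊤ : ℕ∞) lam)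
variable (hf0 : f 0 = fun _ => 1)
variable (hf : ∀ i, i ≠ 0 → f i = fun y => lam y + c i)
variable (hfne : ∀ i y, f i y ≠ 0)
variable (hgradpar : ∀ k l y, covDerVF (G 0) (grad0 (G 0) lam) k l y = 0)
variable (hgradnull : ∀ y, (∑ a, ∑ b, (G 0 y)⁻¹ a b * pd a lam y * pd b lam y) = 0)

include hG hGs hGn hlam hf0 hf hfne in
lemma R2 (i : Fin (m+1)) (a b : κ i) (q p : (i : Fin (m+1)) × κ i)
    (h : q.1 ≠ i ∨ p.1 ≠ i) (x : ((i : Fin (m+1)) × κ i) → ℝ) :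
    riem (warpedMetric G f) q ⟨i,a⟩ ⟨i,b⟩ p x = 0 := by
  obtain ⟨l, d⟩ := q
  obtain ⟨k, cc⟩ := p
  by_cases hki : k = i
  · subst hki
    have hl : l ≠ k := by
      rcases h with h | h
      · exact h
      · exact absurd rfl h
    by_cases hl0 : l = 0
    · subst hl0
      have hi : k ≠ 0 := fun hc => hl hc.symm
      exact R2b hG hGs hGn hlam hf0 hf hfne k hi d a b cc x
    · exact R2a hG hGs hGn hlam hf0 hf hfne k l hl0 hl d a b cc x
  · by_cases hi0 : i = 0
    · subst hi0
      exact R2c1 hG hGs hGn hlam hf0 hf hfne k l hki d a b cc x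
    · by_cases hk0 : k = 0
      · subst hk0
        exact R2c2 hG hGs hGn hlam hf0 hf hfne i l hi0 d a b cc x
      · exact R2c3 hG hGn hlam hf0 hf hfne i k l hi0 hk0
          (fun hc => hki hc.symm) d a b cc x

include hG hGs hGn hlam hf0 hf hfne hgradpar hgradnull in
lemma R3 (i j : Fin (m+1)) (hij : i ≠ j) (a : κ i) (b : κ j)
    (q p : (i : Fin (m+1)) × κ i) (x : ((i : Fin (m+1)) × κ i) → ℝ) :
    riem (warpedMetric G f) q ⟨i,a⟩ ⟨j,b⟩ p x = 0 := by
  obtain ⟨l, d⟩ := q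
  obtain ⟨k, cc⟩ := p
  by_cases hi0 : i = 0
  · subst hi0
    have hj : j ≠ 0 := fun hc => hij hc.symm
    by_cases hk0 : k = 0
    · subst hk0
      exact R3b_0 hG hGs hGn hlam hf0 hf hfne hgradpar j l hj d a b cc x
    · by_cases hkj : k = j
      · subst hkj
        exact R3b_j hG hGs hGn hlam hf0 hf hfne hgradpar k l hj d a b cc x
      · exact R3b_other hG hGs hGn hlam hf0 hf hfne j k l hj hk0 hkj d a b cc x
  · by_cases hj0 : j = 0
    · subst hj0
      rw [riem_antisymm (warpedMetric G f) ⟨l,d⟩ ⟨i,a⟩ ⟨0,b⟩ ⟨k,cc⟩ x]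
      have hz : riem (warpedMetric G f) ⟨l,d⟩ ⟨0,b⟩ ⟨i,a⟩ ⟨k,cc⟩ x = 0 := by
        by_cases hk0 : k = 0
        · subst hk0
          exact R3b_0 hG hGs hGn hlam hf0 hf hfne hgradpar i l hi0 d b a cc x
        · by_cases hki : k = i
          · subst hki
            exact R3b_j hG hGs hGn hlam hf0 hf hfne hgradpar k l hi0 d b a cc x
          · exact R3b_other hG hGs hGn hlam hf0 hf hfne i k l hi0 hk0 hki d b a cc x
      rw [hz, neg_zero]
    · by_cases hk0 : k = 0
      · subst hk0
        exact R3a_0 hG hGs hGn hlam hf0 hf hfne i j l hi0 hj0 hij d a b cc x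
      · by_cases hkj : k = j
        · subst hkj
          exact R3a_j hG hGs hGn hlam hf0 hf hfne hgradnull i k l hi0 hj0 hij
            d a b cc x
        · by_cases hki : k = i
          · subst hki
            rw [riem_antisymm (warpedMetric G f) ⟨l,d⟩ ⟨k,a⟩ ⟨j,b⟩ ⟨k,cc⟩ x]
            rw [R3a_j hG hGs hGn hlam hf0 hf hfne hgradnull j k l hj0 hi0
              (fun hc => hij hc.symm) d b a cc x, neg_zero]
          · exact R3a_other hG hGs hGn hlam hf0 hf hfne i j k l hi0 hj0 hij
              hk0 hki hkj d a b cc x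

include hG hGs hGn hlam hf0 hf hfne hgradpar hgradnull in
lemma Ric1 (i : Fin (m+1)) (a b : κ i) (x : ((i : Fin (m+1)) × κ i) → ℝ) :
    ricci (warpedMetric G f) ⟨i,a⟩ ⟨i,b⟩ x = ricci (G i) a b (x ∘ Sigma.mk i) := by
  unfold ricci
  rw [sumSigma, Finset.sum_eq_single_of_mem i (Finset.mem_univ i)]
  · apply Finset.sum_congr rfl
    intro d _
    exact R1 hG hGs hGn hlam hf0 hf hfne hgradnull i d d a b x
  · intro l _ hl
    apply Finset.sum_eq_zero
    intro d _
    exact R3 hG hGs hGn hlam hf0 hf hfne hgradpar hgradnull l i hl d a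
      ⟨l,d⟩ ⟨i,b⟩ x

include hG hGs hGn hlam hf0 hf hfne hgradpar hgradnull in
lemma Ric2 (i j : Fin (m+1)) (hij : i ≠ j) (a : κ i) (b : κ j)
    (x : ((i : Fin (m+1)) × κ i) → ℝ) :
    ricci (warpedMetric G f) ⟨i,a⟩ ⟨j,b⟩ x = 0 := by
  unfold ricci
  rw [sumSigma]
  apply Finset.sum_eq_zero; intro l _
  apply Finset.sum_eq_zero; intro d _
  by_cases hli : l = i
  · subst hli
    exact R2 hG hGs hGn hlam hf0 hf hfne l d a ⟨l,d⟩ ⟨j,b⟩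
      (Or.inr (fun hc => hij hc.symm)) x
  · exact R3 hG hGs hGn hlam hf0 hf hfne hgradpar hgradnull l i hli d a
      ⟨l,d⟩ ⟨j,b⟩ x

end PartF


/-- for a multiply warped product `h = h₀ + f₁²h₁ + … + f_m²h_m` with
`fᵢ = λ + cᵢ` nowhere vanishing and `grad λ` parallel and null for `h₀`, the curvature
satisfies `R(Xᵢ,Yᵢ) = Rⁱ(Xᵢ,Yᵢ)` and `R(X_j,X_k) = 0` for `j ≠ k`; consequently
`Ric(Xᵢ,Yᵢ) = Ricⁱ(Xᵢ,Yᵢ)` and `Ric(X_j,X_k) = 0` for `j ≠ k`. -/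
theorem statement_14 {m : ℕ} {κ : Fin (m + 1) → Type}
    [∀ i, Fintype (κ i)] [∀ i, DecidableEq (κ i)]
    (G : ∀ i, (κ i → ℝ) → Matrix (κ i) (κ i) ℝ)
    (f : Fin (m + 1) → (κ 0 → ℝ) → ℝ)
    (lam : (κ 0 → ℝ) → ℝ) (c : Fin (m + 1) → ℝ)
    (hG : ∀ i, SmoothM (G i)) (hGs : ∀ i, SymM (G i)) (hGn : ∀ i, NondegM (G i))
    (hlam : ContDiff ℝ (⊤ : ℕ∞) lam)
    (hf0 : f 0 = fun _ => 1)
    (hf : ∀ i, i ≠ 0 → f i = fun y => lam y + c i)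
    (hfne : ∀ i y, f i y ≠ 0)
    (hgradpar : ∀ k l y, covDerVF (G 0) (grad0 (G 0) lam) k l y = 0)
    (hgradnull : ∀ y, (∑ a, ∑ b, (G 0 y)⁻¹ a b * pd a lam y * pd b lam y) = 0) :
    ∀ x : ((i : Fin (m + 1)) × κ i) → ℝ,
      (∀ (i : Fin (m + 1)) (a b c' d : κ i),
        riem (warpedMetric G f) ⟨i, d⟩ ⟨i, a⟩ ⟨i, b⟩ ⟨i, c'⟩ x
          = riem (G i) d a b c' (x ∘ Sigma.mk i)) ∧
      (∀ (i : Fin (m + 1)) (a b : κ i) (q p : (i : Fin (m + 1)) × κ i),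
        (q.1 ≠ i ∨ p.1 ≠ i) →
        riem (warpedMetric G f) q ⟨i, a⟩ ⟨i, b⟩ p x = 0) ∧
      (∀ (i j : Fin (m + 1)), i ≠ j → ∀ (a : κ i) (b : κ j)
          (q p : (i : Fin (m + 1)) × κ i),
        riem (warpedMetric G f) q ⟨i, a⟩ ⟨j, b⟩ p x = 0) ∧
      (∀ (i : Fin (m + 1)) (a b : κ i),
        ricci (warpedMetric G f) ⟨i, a⟩ ⟨i, b⟩ x = ricci (G i) a b (x ∘ Sigma.mk i)) ∧
      (∀ (i j : Fin (m + 1)), i ≠ j → ∀ (a : κ i) (b : κ j),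
        ricci (warpedMetric G f) ⟨i, a⟩ ⟨j, b⟩ x = 0) := by
  intro x
  refine ⟨?_, ?_, ?_, ?_, ?_⟩
  · intro i a b c' d
    exact R1 hG hGs hGn hlam hf0 hf hfne hgradnull i d a b c' x
  · intro i a b q p h
    exact R2 hG hGs hGn hlam hf0 hf hfne i a b q p h x
  · intro i j hij a b q p
    exact R3 hG hGs hGn hlam hf0 hf hfne hgradpar hgradnull i j hij a b q p x
  · intro i a b
    exact Ric1 hG hGs hGn hlam hf0 hf hfne hgradpar hgradnull i a b x
  · intro i j hij a b
    exact Ric2 hG hGs hGn hlam hf0 hf hfne hgradpar hgradnull i j hij a b x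
end

section
/- Let (M,g) be a pseudo-Riemannian manifold of dimension n and v a projective vector field. Then φ(v) := L_v g − (1/(n+1))·trace((L_v g)^♯)·g is proportional to g at every point (with a constant factor of proportionality) if and only if v is a homothety, i.e., L_v g = c·g for some constant c. -/
open Real Matrix Finset

/-! Coordinate framework for pseudo-Riemannian geometry on `ℝ^ι`:
metrics are matrix-valued functions, and the Levi-Civita connection is given by
the Christoffel symbols. -/

variable {ι : Type} [Fintype ι] [DecidableEq ι]

/-- The Lie derivative `(L_v g)_{ij}` of a metric along a vector field, in coordinates. -/
noncomputable def lieDer {ι : Type} [Fintype ι] [DecidableEq ι]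
    (g : (ι → ℝ) → Matrix ι ι ℝ) (v : (ι → ℝ) → ι → ℝ) (i j : ι) (x : ι → ℝ) : ℝ :=
  (∑ k, v x k * pd k (fun y => g y i j) x)
    + (∑ k, g x k j * pd i (fun y => v y k) x)
    + ∑ k, g x i k * pd j (fun y => v y k) x

/-- The tensor `φ(v) = L_v g − (1/(n+1))·trace((L_v g)^♯)·g`. -/
noncomputable def phiTensor {ι : Type} [Fintype ι] [DecidableEq ι]
    (g : (ι → ℝ) → Matrix ι ι ℝ) (v : (ι → ℝ) → ι → ℝ) (i j : ι) (x : ι → ℝ) : ℝ :=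
  lieDer g v i j x
    - (1 / ((Fintype.card ι : ℝ) + 1)) *
        (∑ a, ∑ b, (g x)⁻¹ a b * lieDer g v a b x) * g x i j

/-- for a projective vector field `v`, the tensor
`φ(v) = L_v g − (1/(n+1))·trace((L_v g)^♯)·g` is proportional to `g` with a constant factor
iff `v` is a homothety, i.e. `L_v g = c·g` for a constant `c`. -/
theorem statement_16 {ι : Type} [Fintype ι] [DecidableEq ι]
    (g : (ι → ℝ) → Matrix ι ι ℝ) (v : (ι → ℝ) → ι → ℝ)
    (hg : SmoothM g) (hgs : SymM g) (hgn : NondegM g)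
    (hv : ∀ l, ContDiff ℝ (⊤ : ℕ∞) fun x => v x l)
    -- `v` is projective: `φ(v)` is a solution of the main equation `∇_X L = X^♭ ⊙ Λ`.
    (hproj : ∃ Λ : (ι → ℝ) → ι → ℝ,
      ProjEqn g (fun y => Matrix.of fun i j => phiTensor g v i j y) Λ) :
    (∃ c : ℝ, ∀ x i j, phiTensor g v i j x = c * g x i j) ↔
    (∃ c : ℝ, ∀ x i j, lieDer g v i j x = c * g x i j) := by
  classical
  set n : ℝ := (Fintype.card ι : ℝ) with hn
  have hn0 : (0:ℝ) ≤ n := by positivity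
  have hn1 : n + 1 ≠ 0 := by linarith
  have htr : ∀ x, (∑ a, ∑ b, (g x)⁻¹ a b * g x a b) = n := by
    intro x
    have hinv : (g x)⁻¹ * g x = 1 :=
      Matrix.nonsing_inv_mul _ (isUnit_iff_ne_zero.mpr (hgn x))
    have hsym : ∀ a b, g x a b = g x b a := fun a b =>
      congrFun (congrFun (hgs x) b) a
    have h1 : (∑ a, ∑ b, (g x)⁻¹ a b * g x a b) = Matrix.trace ((g x)⁻¹ * g x) := by
      unfold Matrix.trace
      refine Finset.sum_congr rfl fun a _ => ?_
      simp only [Matrix.diag_apply, Matrix.mul_apply]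
      exact Finset.sum_congr rfl fun b _ => by rw [hsym b a]
    rw [h1, hinv, Matrix.trace_one]
  constructor
  · rintro ⟨c, hc⟩
    refine ⟨c * (n + 1), fun x i j => ?_⟩
    obtain ⟨T, hT⟩ : ∃ T : ℝ, T = ∑ a, ∑ b, (g x)⁻¹ a b * lieDer g v a b x := ⟨_, rfl⟩
    have hL : ∀ i j, lieDer g v i j x = c * g x i j + (1 / (n + 1)) * T * g x i j := by
      intro i j
      have h := hc x i j
      unfold phiTensor at h
      rw [← hn, ← hT] at h
      linarith
    have hTval : T = c * n + (1 / (n + 1)) * T * n := by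
      conv_lhs => rw [hT]
      have expand : ∀ a b, (g x)⁻¹ a b * lieDer g v a b x
          = (c + 1 / (n + 1) * T) * ((g x)⁻¹ a b * g x a b) := by
        intro a b; rw [hL a b]; ring
      simp_rw [expand, ← Finset.mul_sum]
      rw [htr x]
      ring
    have hTsolve : T = c * n * (n + 1) := by
      field_simp at hTval
      nlinarith [hTval]
    rw [hL i j, hTsolve]
    field_simp
    ring
  · rintro ⟨c, hc⟩
    refine ⟨c / (n + 1), fun x i j => ?_⟩
    unfold phiTensor
    rw [← hn]
    have hTr : (∑ a, ∑ b, (g x)⁻¹ a b * lieDer g v a b x) = c * n := by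
      have expand : ∀ a b, (g x)⁻¹ a b * lieDer g v a b x
          = c * ((g x)⁻¹ a b * g x a b) := by
        intro a b; rw [hc x a b]; ring
      simp_rw [expand, ← Finset.mul_sum]
      rw [htr x]
    rw [hTr, hc x i j]
    field_simp
    ring
end

section
/- Let (M,g) be a pseudo-Riemannian manifold with a parallel null 1-form Λ (∇Λ = 0, g(Λ^♯,Λ^♯) = 0) and a function λ with dλ = Λ. Then the vector field v = λΛ^♯ satisfies ∇v^♭ = Λ ⊗ Λ, hence L_v g − (1/(n+1))trace((L_v g)^♯)g = 2Λ⊗Λ − (2g(Λ^♯,Λ^♯)/(n+1))g = 2Λ⊗Λ, and this tensor satisfies ∇_X(2Λ⊗Λ) = 0 = X^♭ ⊙ 0, so v is a projective (indeed affine) vector field which is not Killing when Λ ≢ 0. -/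
open Real Matrix Finset

/-! Coordinate framework for pseudo-Riemannian geometry on `ℝ^ι`:
metrics are matrix-valued functions, and the Levi-Civita connection is given by
the Christoffel symbols. -/

variable {ι : Type} [Fintype ι] [DecidableEq ι]

section Helpers19

variable {ι : Type} [Fintype ι] [DecidableEq ι]

lemma pd_mul19 {f h : (ι → ℝ) → ℝ} {x : ι → ℝ} (i : ι)
    (hf : DifferentiableAt ℝ f x) (hh : DifferentiableAt ℝ h x) :
    pd i (fun y => f y * h y) x = pd i f x * h x + f x * pd i h x := by
  unfold pd
  rw [fderiv_fun_mul hf hh]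
  simp only [ContinuousLinearMap.add_apply, ContinuousLinearMap.smul_apply, smul_eq_mul]
  ring

lemma pd_const_mul19 {f : (ι → ℝ) → ℝ} {x : ι → ℝ} (i : ι) (c : ℝ)
    (hf : DifferentiableAt ℝ f x) :
    pd i (fun y => c * f y) x = c * pd i f x := by
  unfold pd
  rw [fderiv_const_mul hf c]
  simp

lemma pd_sum19 {κ : Type*} (s : Finset κ) {f : κ → (ι → ℝ) → ℝ} {x : ι → ℝ} (i : ι)
    (hf : ∀ k ∈ s, DifferentiableAt ℝ (f k) x) :
    pd i (fun y => ∑ k ∈ s, f k y) x = ∑ k ∈ s, pd i (f k) x := by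
  unfold pd
  rw [fderiv_fun_sum hf]
  simp [ContinuousLinearMap.sum_apply]

lemma diffAt_det19 {M : (ι → ℝ) → Matrix ι ι ℝ} {x : ι → ℝ}
    (h : ∀ i j, DifferentiableAt ℝ (fun y => M y i j) x) :
    DifferentiableAt ℝ (fun y => (M y).det) x := by
  have e : (fun y => (M y).det)
      = fun y => ∑ σ : Equiv.Perm ι, ((Equiv.Perm.sign σ : ℤ) : ℝ) * ∏ i, M y (σ i) i := by
    funext y; rw [Matrix.det_apply]
    apply Finset.sum_congr rfl
    intro σ _
    simp [Units.smul_def, zsmul_eq_mul]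
  rw [e]
  apply DifferentiableAt.fun_sum
  intro σ _
  apply DifferentiableAt.const_mul
  exact (HasFDerivAt.finset_prod (fun i (_ : i ∈ Finset.univ) =>
    (h (σ i) i).hasFDerivAt)).differentiableAt

lemma diffAt_inv_entry19 (g : (ι → ℝ) → Matrix ι ι ℝ) (hg : SmoothM g) (hgn : NondegM g)
    (a l : ι) (x : ι → ℝ) : DifferentiableAt ℝ (fun y => (g y)⁻¹ a l) x := by
  have hentry : ∀ i j, DifferentiableAt ℝ (fun y => g y i j) x := fun i j =>
    ((hg i j).differentiable (by simp)).differentiableAt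
  have hdet : DifferentiableAt ℝ (fun y => (g y).det) x := diffAt_det19 hentry
  have hadj : DifferentiableAt ℝ (fun y => (g y).adjugate a l) x := by
    have e : (fun y => (g y).adjugate a l)
        = fun y => ((g y).updateRow l (Pi.single a 1)).det := by
      funext y; rw [Matrix.adjugate_apply]
    rw [e]
    apply diffAt_det19
    intro i j
    by_cases h : i = l
    · simp only [Matrix.updateRow_apply, h, if_pos rfl]
      exact differentiableAt_const _
    · simp only [Matrix.updateRow_apply, if_neg h]
      exact hentry i j
  have e : (fun y => (g y)⁻¹ a l) = fun y => ((g y).det)⁻¹ * (g y).adjugate a l := by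
    funext y
    rw [Matrix.inv_def]
    simp [Ring.inverse_eq_inv', Matrix.smul_apply, smul_eq_mul]
  rw [e]
  exact (hdet.inv (hgn x)).mul hadj

end Helpers19

/-- for a parallel null 1-form `Λ` with `dλ = Λ`, the vector field
`v = λΛ^♯` satisfies `∇v^♭ = Λ ⊗ Λ`; hence
`φ(v) = L_v g − (1/(n+1))·trace((L_v g)^♯)·g = 2Λ⊗Λ`, the tensor `2Λ⊗Λ` is parallel
(`∇_X(2Λ⊗Λ) = 0 = X^♭ ⊙ 0`), so `v` is a projective (indeed affine) vector field, and `v`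
is not Killing since `Λ ≢ 0`. -/
theorem statement_19 {ι : Type} [Fintype ι] [DecidableEq ι]
    (g : (ι → ℝ) → Matrix ι ι ℝ) (Λ : (ι → ℝ) → ι → ℝ) (lam : (ι → ℝ) → ℝ)
    (hg : SmoothM g) (hgs : SymM g) (hgn : NondegM g)
    (hΛ : ∀ i, ContDiff ℝ (⊤ : ℕ∞) fun x => Λ x i)
    (hlam : ContDiff ℝ (⊤ : ℕ∞) lam)
    (hpar : ∀ k i x, covDer1 g Λ k i x = 0)
    (hnull : ∀ x, (∑ a, ∑ b, (g x)⁻¹ a b * Λ x a * Λ x b) = 0)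
    (hdlam : ∀ i x, pd i lam x = Λ x i)
    (hΛne : ∃ x i, Λ x i ≠ 0) :
    -- `∇ v^♭ = Λ ⊗ Λ` for `v = λ Λ^♯` :
    (∀ k i x,
      covDer1 g
        (fun y j => ∑ a, g y j a * (lam y * ∑ l, (g y)⁻¹ a l * Λ y l)) k i x
        = Λ x k * Λ x i) ∧
    -- `φ(v) = 2 Λ ⊗ Λ` :
    (∀ x i j,
      phiTensor g (fun y a => lam y * ∑ l, (g y)⁻¹ a l * Λ y l) i j x
        = 2 * Λ x i * Λ x j) ∧
    -- `2 Λ ⊗ Λ` is parallel, i.e. solves `∇_X L = X^♭ ⊙ 0` :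
    (∀ k i j x,
      covDer2 g (fun y => Matrix.of fun i j => 2 * Λ y i * Λ y j) k i j x = 0) ∧
    -- `v` is not a Killing vector field :
    ¬ (∀ x i j, lieDer g (fun y a => lam y * ∑ l, (g y)⁻¹ a l * Λ y l) i j x = 0) := by
    classical
  have hgd : ∀ i j (x : ι → ℝ), DifferentiableAt ℝ (fun y => g y i j) x := fun i j x =>
    ((hg i j).differentiable (by simp)).differentiableAt
  have hΛd : ∀ i (x : ι → ℝ), DifferentiableAt ℝ (fun y => Λ y i) x := fun i x =>
    ((hΛ i).differentiable (by simp)).differentiableAt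
  have hlamd : ∀ x : ι → ℝ, DifferentiableAt ℝ lam x := fun x =>
    (hlam.differentiable (by simp)).differentiableAt
  have hgsym : ∀ (x : ι → ℝ) a b, g x a b = g x b a := by
    intro x a b
    have h := congrFun (congrFun (hgs x) a) b
    rw [Matrix.transpose_apply] at h
    exact h.symm
  have hinvsym : ∀ (x : ι → ℝ) a b, (g x)⁻¹ a b = (g x)⁻¹ b a := by
    intro x a b
    have h1 : ((g x)⁻¹)ᵀ = ((g x)ᵀ)⁻¹ := Matrix.transpose_nonsing_inv (g x)
    have h2 : ((g x)ᵀ)⁻¹ = (g x)⁻¹ := by rw [hgs x]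
    have h := congrFun (congrFun (h1.trans h2) b) a
    rw [Matrix.transpose_apply] at h
    exact h
  have hunit : ∀ x : ι → ℝ, IsUnit (g x).det := fun x => isUnit_iff_ne_zero.mpr (hgn x)
  have hgginv : ∀ (x : ι → ℝ) j l, (∑ a, g x j a * (g x)⁻¹ a l) = if j = l then 1 else 0 := by
    intro x j l
    rw [← Matrix.mul_apply, Matrix.mul_nonsing_inv _ (hunit x), Matrix.one_apply]
  set v : (ι → ℝ) → ι → ℝ := fun y a => lam y * ∑ l, (g y)⁻¹ a l * Λ y l with hv
  have hvd : ∀ a (x : ι → ℝ), DifferentiableAt ℝ (fun y => v y a) x := by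
    intro a x
    exact (hlamd x).mul (DifferentiableAt.fun_sum fun l _ =>
      ((diffAt_inv_entry19 g hg hgn a l x).fun_mul (hΛd l x)))
  have hflat : ∀ (y : ι → ℝ) j, (∑ k, g y j k * v y k) = lam y * Λ y j := by
    intro y j
    have key : (∑ a, g y j a * v y a)
        = lam y * ∑ l, (∑ a, g y j a * (g y)⁻¹ a l) * Λ y l := by
      simp only [hv, Finset.mul_sum, Finset.sum_mul]
      rw [Finset.sum_comm]
      exact Finset.sum_congr rfl fun a _ => Finset.sum_congr rfl fun l _ => by ring
    rw [key]
    simp [hgginv]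
  have hparA : ∀ k i (x : ι → ℝ),
      pd k (fun y => Λ y i) x = ∑ l, christoffel g l k i x * Λ x l := by
    intro k i x
    have h := hpar k i x
    unfold covDer1 at h
    linarith
  have hA : ∀ k i (x : ι → ℝ),
      covDer1 g (fun y j => lam y * Λ y j) k i x = Λ x k * Λ x i := by
    intro k i x
    simp only [covDer1]
    have e1 : pd k (fun y => lam y * Λ y i) x
        = Λ x k * Λ x i + lam x * pd k (fun y => Λ y i) x := by
      rw [pd_mul19 k (hlamd x) (hΛd i x), hdlam]
    have e2 : (∑ l, christoffel g l k i x * (lam x * Λ x l))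
        = lam x * ∑ l, christoffel g l k i x * Λ x l := by
      rw [Finset.mul_sum]; exact Finset.sum_congr rfl fun l _ => by ring
    rw [e1, e2, hparA k i x]; ring
  have hfun1 : (fun (y : ι → ℝ) j => ∑ a, g y j a * (lam y * ∑ l, (g y)⁻¹ a l * Λ y l))
      = fun y j => lam y * Λ y j := by
    funext y j
    exact hflat y j
  have christ_symm : ∀ l i j (x : ι → ℝ), christoffel g l j i x = christoffel g l i j x := by
    intro l i j x
    simp only [christoffel]
    congr 1
    apply Finset.sum_congr rfl
    intro m _
    have e : (fun y => g y j i) = (fun y => g y i j) := by funext y; exact hgsym y j i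
    rw [e]
    ring
  have h2Γ : ∀ l i j (x : ι → ℝ), christoffel g l i j x + christoffel g l j i x
      = ∑ m, (g x)⁻¹ l m * (pd i (fun y => g y j m) x + pd j (fun y => g y i m) x
          - pd m (fun y => g y i j) x) := by
    intro l i j x
    rw [christ_symm l i j x]
    simp only [christoffel]
    ring
  have hΓ : ∀ i j (x : ι → ℝ),
      lam x * (pd i (fun y => Λ y j) x + pd j (fun y => Λ y i) x)
      = ∑ k, (pd i (fun y => g y j k) x + pd j (fun y => g y i k) x
          - pd k (fun y => g y i j) x) * v x k := by
    intro i j x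
    rw [hparA i j x, hparA j i x, ← Finset.sum_add_distrib]
    have e : ∀ l, christoffel g l i j x * Λ x l + christoffel g l j i x * Λ x l
        = (∑ m, (g x)⁻¹ l m * (pd i (fun y => g y j m) x + pd j (fun y => g y i m) x
            - pd m (fun y => g y i j) x)) * Λ x l := by
      intro l; rw [← add_mul, h2Γ l i j x]
    rw [Finset.sum_congr rfl fun l _ => e l]
    have lhs_eq : lam x * ∑ l, (∑ m, (g x)⁻¹ l m *
          (pd i (fun y => g y j m) x + pd j (fun y => g y i m) x
            - pd m (fun y => g y i j) x)) * Λ x l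
        = ∑ l, ∑ m, lam x * ((g x)⁻¹ l m *
          (pd i (fun y => g y j m) x + pd j (fun y => g y i m) x
            - pd m (fun y => g y i j) x) * Λ x l) := by
      rw [Finset.mul_sum]
      refine Finset.sum_congr rfl fun l _ => ?_
      rw [Finset.sum_mul, Finset.mul_sum]
    have rhs_eq : (∑ k, (pd i (fun y => g y j k) x + pd j (fun y => g y i k) x
          - pd k (fun y => g y i j) x) * v x k)
        = ∑ m, ∑ l, lam x * ((g x)⁻¹ l m *
          (pd i (fun y => g y j m) x + pd j (fun y => g y i m) x
            - pd m (fun y => g y i j) x) * Λ x l) := by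
      refine Finset.sum_congr rfl fun m _ => ?_
      simp only [hv, Finset.mul_sum]
      refine Finset.sum_congr rfl fun l _ => ?_
      rw [hinvsym x l m]
      ring
    rw [lhs_eq, rhs_eq, Finset.sum_comm]
  have hS : ∀ i j (x : ι → ℝ),
      (∑ k, g x k j * pd i (fun y => v y k) x)
      = Λ x i * Λ x j + lam x * pd i (fun y => Λ y j) x
        - ∑ k, pd i (fun y => g y j k) x * v x k := by
    intro i j x
    have h1 : pd i (fun y => lam y * Λ y j) x
        = ∑ k, pd i (fun y => g y j k * v y k) x := by
      have hfun : (fun y => lam y * Λ y j) = (fun y => ∑ k, g y j k * v y k) := by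
        funext y; rw [hflat y j]
      rw [hfun, pd_sum19 Finset.univ i (fun k _ => (hgd j k x).fun_mul (hvd k x))]
    have h3 : pd i (fun y => lam y * Λ y j) x
        = Λ x i * Λ x j + lam x * pd i (fun y => Λ y j) x := by
      rw [pd_mul19 i (hlamd x) (hΛd j x), hdlam]
    have h4 : (∑ k, g x k j * pd i (fun y => v y k) x)
        = ∑ k, g x j k * pd i (fun y => v y k) x :=
      Finset.sum_congr rfl fun k _ => by rw [hgsym x k j]
    have h5 : (∑ k, pd i (fun y => g y j k * v y k) x)
        = (∑ k, pd i (fun y => g y j k) x * v x k)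
          + ∑ k, g x j k * pd i (fun y => v y k) x := by
      rw [← Finset.sum_add_distrib]
      exact Finset.sum_congr rfl fun k _ => pd_mul19 i (hgd j k x) (hvd k x)
    rw [h4]
    have h6 := h1
    rw [h5, h3] at h6
    linarith
  have lie_eq : ∀ (x : ι → ℝ) i j, lieDer g v i j x = 2 * Λ x i * Λ x j := by
    intro x i j
    simp only [lieDer]
    have t3 : (∑ k, g x i k * pd j (fun y => v y k) x)
        = ∑ k, g x k i * pd j (fun y => v y k) x :=
      Finset.sum_congr rfl fun k _ => by rw [hgsym x i k]
    rw [t3, hS i j x, hS j i x]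
    have hcancel : (∑ k, v x k * pd k (fun y => g y i j) x)
        + (∑ k, (pd i (fun y => g y j k) x + pd j (fun y => g y i k) x
            - pd k (fun y => g y i j) x) * v x k)
        = (∑ k, pd i (fun y => g y j k) x * v x k)
          + ∑ k, pd j (fun y => g y i k) x * v x k := by
      rw [← Finset.sum_add_distrib, ← Finset.sum_add_distrib]
      exact Finset.sum_congr rfl fun k _ => by ring
    linear_combination hΓ i j x + hcancel
  have htr : ∀ x : ι → ℝ, (∑ a, ∑ b, (g x)⁻¹ a b * lieDer g v a b x) = 0 := by
    intro x
    have e : (∑ a, ∑ b, (g x)⁻¹ a b * lieDer g v a b x)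
        = 2 * ∑ a, ∑ b, (g x)⁻¹ a b * Λ x a * Λ x b := by
      rw [Finset.mul_sum]
      refine Finset.sum_congr rfl fun a _ => ?_
      rw [Finset.mul_sum]
      refine Finset.sum_congr rfl fun b _ => ?_
      rw [lie_eq x a b]; ring
    rw [e, hnull x, mul_zero]
  refine ⟨?_, ?_, ?_, ?_⟩
  · intro k i x
    rw [hfun1]
    exact hA k i x
  · intro x i j
    simp only [phiTensor]
    rw [lie_eq x i j, htr x]
    ring
  · intro k i j x
    simp only [covDer2, Matrix.of_apply]
    have e0 : pd k (fun y => 2 * Λ y i * Λ y j) x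
        = 2 * (pd k (fun y => Λ y i) x * Λ x j + Λ x i * pd k (fun y => Λ y j) x) := by
      have e : (fun y => 2 * Λ y i * Λ y j) = fun y => 2 * (Λ y i * Λ y j) := by
        funext y; ring
      rw [e, pd_const_mul19 k 2 ((hΛd i x).fun_mul (hΛd j x)),
        pd_mul19 k (hΛd i x) (hΛd j x), mul_add]
    have e1 : (∑ l, christoffel g l k i x * (2 * Λ x l * Λ x j))
        = 2 * Λ x j * ∑ l, christoffel g l k i x * Λ x l := by
      rw [Finset.mul_sum]; exact Finset.sum_congr rfl fun l _ => by ring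
    have e2 : (∑ l, christoffel g l k j x * (2 * Λ x i * Λ x l))
        = 2 * Λ x i * ∑ l, christoffel g l k j x * Λ x l := by
      rw [Finset.mul_sum]; exact Finset.sum_congr rfl fun l _ => by ring
    rw [e0, e1, e2, hparA k i x, hparA k j x]
    ring
  · intro hK
    obtain ⟨x, i, hne⟩ := hΛne
    have h0 : (2:ℝ) * Λ x i * Λ x i = 0 := by rw [← lie_eq x i i]; exact hK x i i
    have h1 : Λ x i * Λ x i = 0 := by linear_combination h0 / 2
    exact hne (mul_self_eq_zero.mp h1)
end
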